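/- arXiv:2604.22733 — 9 statements merged into one kernel-verified Lean document; each statement's English description precedes it below -/
import Mathlib

section
/- Let n ≥ 1, let v ∈ ℂⁿ be regarded as a row vector and let B be an n×n complex matrix. Then the determinant of the n×n matrix whose rows are v, vB, vB², …, vB^{n−1} is zero if and only if B has an eigenvector orthogonal to v, i.e., there exists a nonzero column vector u ∈ ℂⁿ and λ ∈ ℂ with Bu = λu and v·u = 0. -/
open Matrix Polynomial

/-- The linear functional `w ↦ v ⬝ᵥ (A *ᵥ w)`. -/
private noncomputable def phi {n : ℕ} (v : Fin n → ℂ) (A : Matrix (Fin n) (Fin n) ℂ) :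
    (Fin n → ℂ) →ₗ[ℂ] ℂ where
  toFun w := dotProduct v (A.mulVec w)
  map_add' x y := by simp [Matrix.mulVec_add, dotProduct_add]
  map_smul' c x := by simp [Matrix.mulVec_smul, dotProduct_smul]

private lemma phi_apply {n : ℕ} (v : Fin n → ℂ) (A : Matrix (Fin n) (Fin n) ℂ)
    (w : Fin n → ℂ) : phi v A w = dotProduct v (A.mulVec w) := rfl

/-- The linear functional `M ↦ v ⬝ᵥ (M *ᵥ u)`, linear in the matrix. -/
private noncomputable def psi {n : ℕ} (v u : Fin n → ℂ) :
    Matrix (Fin n) (Fin n) ℂ →ₗ[ℂ] ℂ where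
  toFun M := dotProduct v (M.mulVec u)
  map_add' A C := by simp [Matrix.add_mulVec, dotProduct_add]
  map_smul' c A := by simp [Matrix.smul_mulVec, dotProduct_smul]

private lemma psi_apply {n : ℕ} (v u : Fin n → ℂ) (M : Matrix (Fin n) (Fin n) ℂ) :
    psi v u M = dotProduct v (M.mulVec u) := rfl

/-- For `n ≥ 1`, a row vector `v ∈ ℂⁿ` and an `n×n` complex matrix `B`,
the determinant of the matrix whose rows are `v, vB, vB², …, vB^{n-1}` vanishes
iff `B` has an eigenvector orthogonal to `v`. -/
theorem stmt0 (n : ℕ) (hn : 1 ≤ n) (v : Fin n → ℂ) (B : Matrix (Fin n) (Fin n) ℂ) :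
    (Matrix.of fun i j : Fin n => Matrix.vecMul v (B ^ (i : ℕ)) j).det = 0 ↔
      ∃ u : Fin n → ℂ, u ≠ 0 ∧ (∃ μ : ℂ, B.mulVec u = μ • u) ∧ ∑ i, v i * u i = 0 := by
  constructor
  · intro hdet
    obtain ⟨u, hu, hKu⟩ := Matrix.exists_mulVec_eq_zero_iff.mpr hdet
    -- the low powers annihilate u
    have hlow : ∀ i : Fin n, dotProduct v ((B ^ (i : ℕ)).mulVec u) = 0 := by
      intro i
      have h := congrFun hKu i
      rw [Matrix.dotProduct_mulVec]
      simpa [Matrix.mulVec, dotProduct] using h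
    -- Cayley–Hamilton: all powers annihilate u
    have hdeg : B.charpoly.natDegree = n := by
      simpa using B.charpoly_natDegree_eq_dim
    have hCH : ∑ i ∈ Finset.range (n + 1), B.charpoly.coeff i • B ^ i = 0 := by
      have := Polynomial.aeval_eq_sum_range (p := B.charpoly) B
      rw [Matrix.aeval_self_charpoly, hdeg] at this
      exact this.symm
    have hall : ∀ k : ℕ, dotProduct v ((B ^ k).mulVec u) = 0 := by
      intro k
      induction k using Nat.strong_induction_on with
      | _ k ih =>
        by_cases hk : k < n
        · exact hlow ⟨k, hk⟩
        · push_neg at hk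
          set m := k - n with hm
          have hmk : n + m = k := by omega
          have h0 : ∑ i ∈ Finset.range (n + 1),
              B.charpoly.coeff i • B ^ (i + m) = 0 := by
            have := congrArg (fun M => M * B ^ m) hCH
            simpa [Finset.sum_mul, smul_mul_assoc, pow_add] using this
          have h1 := congrArg (psi v u) h0
          rw [map_zero, map_sum] at h1
          simp only [_root_.map_smul, smul_eq_mul] at h1
          rw [Finset.sum_range_succ] at h1
          have hcn : B.charpoly.coeff n = 1 := by
            have := B.charpoly_monic.coeff_natDegree
            rwa [hdeg] at this
          have hzero : ∀ i ∈ Finset.range n,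
              B.charpoly.coeff i * psi v u (B ^ (i + m)) = 0 := by
            intro i hi
            rw [Finset.mem_range] at hi
            have : psi v u (B ^ (i + m)) = 0 := ih (i + m) (by omega)
            rw [this, mul_zero]
          rw [Finset.sum_eq_zero hzero, zero_add, hcn, one_mul, hmk] at h1
          exact h1
    -- the invariant subspace
    set W : Submodule ℂ (Fin n → ℂ) := ⨅ k : ℕ, LinearMap.ker (phi v (B ^ k)) with hW
    have memW : ∀ w : Fin n → ℂ,
        w ∈ W ↔ ∀ k : ℕ, dotProduct v ((B ^ k).mulVec w) = 0 := by
      intro w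
      simp [hW, Submodule.mem_iInf, LinearMap.mem_ker, phi_apply]
    have huW : u ∈ W := (memW u).mpr hall
    have hBW : ∀ x ∈ W, B.mulVec x ∈ W := by
      intro x hx
      rw [memW] at hx ⊢
      intro k
      rw [Matrix.mulVec_mulVec, ← pow_succ]
      exact hx (k + 1)
    haveI : Nontrivial W := by
      refine ⟨⟨⟨u, huW⟩, 0, ?_⟩⟩
      intro h
      exact hu (by simpa using congrArg Subtype.val h)
    set g : Module.End ℂ W := (Matrix.mulVecLin B).restrict hBW with hg
    obtain ⟨μ, hμ⟩ := Module.End.exists_eigenvalue g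
    obtain ⟨w, hw⟩ := hμ.exists_hasEigenvector
    refine ⟨(w : Fin n → ℂ), ?_, ⟨μ, ?_⟩, ?_⟩
    · intro h
      exact hw.2 (by simpa using h)
    · have := hw.apply_eq_smul
      have h2 := congrArg Subtype.val this
      exact h2
    · have := ((memW w).mp w.2) 0
      simpa [dotProduct] using this
  · rintro ⟨u, hu, ⟨μ, hμ⟩, hvu⟩
    rw [← Matrix.exists_mulVec_eq_zero_iff]
    refine ⟨u, hu, ?_⟩
    have hpow : ∀ k : ℕ, (B ^ k).mulVec u = (μ ^ k) • u := by
      intro k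
      induction k with
      | zero => simp
      | succ k ih =>
        rw [pow_succ, ← Matrix.mulVec_mulVec, hμ, Matrix.mulVec_smul, ih,
          smul_smul, pow_succ, mul_comm]
    funext i
    have : dotProduct v ((B ^ (i : ℕ)).mulVec u) = 0 := by
      rw [hpow, dotProduct_smul]
      simp [dotProduct, hvu]
    rw [Matrix.dotProduct_mulVec] at this
    simpa [Matrix.mulVec, dotProduct] using this
end

section
/- If there exist eigenvectors v_1,…,v_n ∈ ℂⁿ, with v_i an eigenvector of A_i for each i, such that v_1,…,v_n are linearly dependent, then P(A_1,…,A_n) = 0. -/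
/-! The tensor `u = v₁ ⊗ ⋯ ⊗ vₙ` is an eigenvector of the Kronecker sum `A`, with eigenvalue
`∑ μᵢ`, and `w ⬝ u = det [v₁ ⋯ vₙ] = 0` because the `vᵢ` are dependent. So every row `w Aᵏ`
of `M` is orthogonal to `u ≠ 0`, and `M` is singular. -/

/-- The Kronecker-sum matrix `A` of `A_1, …, A_n`, with rows and columns indexed by
functions `f : Fin n → Fin n`:
`A f g = ∑ i, (A_i)_{f(i), g(i)} * ∏_{j ≠ i} [f j = g j]`. -/
noncomputable def kronSum (n : ℕ) (A : Fin n → Matrix (Fin n) (Fin n) ℂ) :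
    Matrix (Fin n → Fin n) (Fin n → Fin n) ℂ :=
  Matrix.of fun f g =>
    ∑ i : Fin n, A i (f i) (g i) *
      ∏ j ∈ Finset.univ.erase i, (if f j = g j then (1 : ℂ) else 0)

/-- The row vector `w`, indexed by functions `f : Fin n → Fin n`, with `w f = sgn f`
if `f` is a permutation and `w f = 0` otherwise. -/
noncomputable def wRow (n : ℕ) : (Fin n → Fin n) → ℂ := fun f =>
  ∑ π : Equiv.Perm (Fin n), if f = ⇑π then ((Equiv.Perm.sign π : ℤ) : ℂ) else 0

/-- The square matrix `M(A_1, …, A_n)` whose rows are `w, wA, wA², …, wA^{nⁿ-1}`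
(rows indexed by functions `Fin n → Fin n` via a bijection with `Fin (nⁿ)`). -/
noncomputable def Mbig (n : ℕ) (A : Fin n → Matrix (Fin n) (Fin n) ℂ) :
    Matrix (Fin n → Fin n) (Fin n → Fin n) ℂ :=
  Matrix.of fun f g =>
    Matrix.vecMul (wRow n) (kronSum n A ^ ((Fintype.equivFin (Fin n → Fin n)) f : ℕ)) g

/-- `P(A_1, …, A_n) = det M(A_1, …, A_n)`. -/
noncomputable def Pbig (n : ℕ) (A : Fin n → Matrix (Fin n) (Fin n) ℂ) : ℂ :=
  (Mbig n A).det

open Finset Matrix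

section KroneckerProduct

variable {ι κ R : Type*} [Fintype ι] [CommSemiring R]

def kronProd (B : ι → Matrix κ κ R) : Matrix (ι → κ) (ι → κ) R :=
  of fun f g => ∏ j, B j (f j) (g j)

def tensorVec (v : ι → κ → R) : (ι → κ) → R :=
  fun f => ∏ j, v j (f j)

theorem kronProd_mulVec_tensorVec [DecidableEq ι] [Fintype κ] (B : ι → Matrix κ κ R)
    (v : ι → κ → R) :
    kronProd B *ᵥ tensorVec v = tensorVec fun j => B j *ᵥ v j := by
  funext f
  simp only [mulVec, dotProduct, kronProd, tensorVec, of_apply, ← prod_mul_distrib]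
  exact (Fintype.prod_sum fun j k => B j (f j) k * v j k).symm

theorem tensorVec_smul (c : ι → R) (v : ι → κ → R) :
    tensorVec (fun j => c j • v j) = (∏ j, c j) • tensorVec v := by
  funext f
  simp only [tensorVec, Pi.smul_apply, smul_eq_mul, prod_mul_distrib]

theorem tensorVec_ne_zero [NoZeroDivisors R] [Nontrivial R] {v : ι → κ → R}
    (hv : ∀ j, v j ≠ 0) : tensorVec v ≠ 0 := by
  choose f hf using fun j => Function.ne_iff.mp (hv j)
  exact Function.ne_iff.mpr ⟨f, prod_ne_zero_iff.mpr fun j _ => hf j⟩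

end KroneckerProduct

theorem kronSum_eq_sum_kronProd (n : ℕ) (A : Fin n → Matrix (Fin n) (Fin n) ℂ) :
    kronSum n A = ∑ i, kronProd (Pi.mulSingle i (A i)) := by
  ext f g
  simp only [kronSum, kronProd, of_apply, Matrix.sum_apply]
  refine sum_congr rfl fun i _ => ?_
  rw [← mul_prod_erase _ _ (mem_univ i), Pi.mulSingle_eq_same]
  congr 1
  refine prod_congr rfl fun j hj => ?_
  rw [Pi.mulSingle_eq_of_ne (ne_of_mem_erase hj), one_apply]

theorem kronSum_mulVec_tensorVec {n : ℕ} {A : Fin n → Matrix (Fin n) (Fin n) ℂ}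
    {v : Fin n → Fin n → ℂ} {μ : Fin n → ℂ} (hμ : ∀ i, A i *ᵥ v i = μ i • v i) :
    kronSum n A *ᵥ tensorVec v = (∑ i, μ i) • tensorVec v := by
  rw [kronSum_eq_sum_kronProd, sum_mulVec, sum_smul]
  refine sum_congr rfl fun i _ => ?_
  have hfactor : ∀ j, (Pi.mulSingle i (A i) : Fin n → Matrix _ _ ℂ) j *ᵥ v j =
      (if j = i then μ i else 1) • v j := by
    intro j
    by_cases hj : j = i
    · subst hj; simp only [Pi.mulSingle_eq_same, hμ, if_pos]
    · simp [hj]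
  rw [kronProd_mulVec_tensorVec, funext hfactor, tensorVec_smul, prod_ite_eq' univ i,
    if_pos (mem_univ i)]

theorem pow_mulVec_of_mulVec_eq_smul {m R : Type*} [Fintype m] [DecidableEq m]
    [CommSemiring R] {B : Matrix m m R} {u : m → R} {c : R} (hu : B *ᵥ u = c • u) (k : ℕ) :
    (B ^ k) *ᵥ u = c ^ k • u := by
  induction k with
  | zero => simp
  | succ k ih => rw [pow_succ', ← mulVec_mulVec, ih, mulVec_smul, hu, smul_smul, pow_succ]

theorem wRow_dotProduct_tensorVec (n : ℕ) (v : Fin n → Fin n → ℂ) :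
    wRow n ⬝ᵥ tensorVec v = (of v).det := by
  rw [← det_transpose, det_apply']
  simp only [dotProduct, wRow, tensorVec, sum_mul, ite_mul, zero_mul]
  rw [sum_comm]
  refine sum_congr rfl fun π _ => ?_
  simp

theorem Pbig_eq_zero_of_eigenvector {n : ℕ} {A : Fin n → Matrix (Fin n) (Fin n) ℂ}
    {u : (Fin n → Fin n) → ℂ} {c : ℂ} (hu0 : u ≠ 0) (hu : kronSum n A *ᵥ u = c • u)
    (hw : wRow n ⬝ᵥ u = 0) : Pbig n A = 0 := by
  refine exists_mulVec_eq_zero_iff.mp ⟨u, hu0, funext fun f => ?_⟩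
  change wRow n ᵥ* _ ⬝ᵥ u = 0
  rw [← dotProduct_mulVec, pow_mulVec_of_mulVec_eq_smul hu, dotProduct_smul, hw, smul_zero]

/-- if `v_i` is an eigenvector of `A_i` for each `i` and `v_1, …, v_n`
are linearly dependent, then `P(A_1, …, A_n) = 0`. -/
theorem stmt2 (n : ℕ) (A : Fin n → Matrix (Fin n) (Fin n) ℂ)
    (v : Fin n → Fin n → ℂ)
    (hv : ∀ i, v i ≠ 0) (heig : ∀ i, ∃ μ : ℂ, (A i).mulVec (v i) = μ • v i)
    (hdep : ¬ LinearIndependent ℂ v) :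
    Pbig n A = 0 := by
  choose μ hμ using heig
  refine Pbig_eq_zero_of_eigenvector (tensorVec_ne_zero hv) (kronSum_mulVec_tensorVec hμ) ?_
  rw [wRow_dotProduct_tensorVec]
  exact det_eq_zero_of_not_linearIndependent_rows hdep
end

section
/- For every n ≥ 1, in the polynomial ring ℂ[λ_{i,j} : 1 ≤ i, j ≤ n] the identity ∏_{f≠g} Σ_{i=1}^n (λ_{i,f(i)} − λ_{i,g(i)}) = ∏_{∅≠K⊆{1,…,n}} ( ∏_{(f,g)} Σ_{i∈K} (λ_{i,f(i)} − λ_{i,g(i)}) )^{n^{n−|K|}} holds, where on the left-hand side (f,g) ranges over all ordered pairs of distinct functions from {1,…,n} to {1,…,n}, and on the right-hand side, for each nonempty subset K of {1,…,n}, (f,g) ranges over all ordered pairs of functions from K to {1,…,n} satisfying f(i) ≠ g(i) for every i ∈ K. -/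
open MvPolynomial Finset

/-- in `ℂ[λ_{i,j} : 1 ≤ i,j ≤ n]`,
`∏_{f ≠ g} ∑ i (λ_{i,f(i)} − λ_{i,g(i)})
  = ∏_{∅ ≠ K ⊆ [n]} (∏_{(f,g) : K → [n], ∀ i, f i ≠ g i} ∑_{i ∈ K} (λ_{i,f(i)} − λ_{i,g(i)}))^{n^{n−|K|}}`. -/
theorem stmt5 (n : ℕ) (hn : 1 ≤ n) :
    (∏ p ∈ Finset.univ.filter
        (fun p : (Fin n → Fin n) × (Fin n → Fin n) => p.1 ≠ p.2),
      ∑ i : Fin n,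
        ((X (i, p.1 i) - X (i, p.2 i)) : MvPolynomial (Fin n × Fin n) ℂ)) =
    ∏ K ∈ Finset.univ.filter (fun K : Finset (Fin n) => K.Nonempty),
      (∏ p ∈ Finset.univ.filter
          (fun p : ({i : Fin n // i ∈ K} → Fin n) × ({i : Fin n // i ∈ K} → Fin n) =>
            ∀ i, p.1 i ≠ p.2 i),
        ∑ i : {i : Fin n // i ∈ K},
          ((X (i.1, p.1 i) - X (i.1, p.2 i)) : MvPolynomial (Fin n × Fin n) ℂ)) ^
        (n ^ (n - K.card)) := by
  classical
  set key : ((Fin n → Fin n) × (Fin n → Fin n)) → Finset (Fin n) :=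
    fun p => Finset.univ.filter (fun i => p.1 i ≠ p.2 i) with hkey
  have hmaps : ∀ p ∈ Finset.univ.filter
      (fun p : (Fin n → Fin n) × (Fin n → Fin n) => p.1 ≠ p.2),
      key p ∈ Finset.univ.filter (fun K : Finset (Fin n) => K.Nonempty) := by
    rintro ⟨f, g⟩ hp
    simp only [mem_filter, mem_univ, true_and] at hp ⊢
    obtain ⟨i, hi⟩ := Function.ne_iff.mp hp
    exact ⟨i, by simp [hkey, hi]⟩
  rw [← Finset.prod_fiberwise_of_maps_to hmaps]
  refine Finset.prod_congr rfl fun K hK => ?_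
  simp only [mem_filter, mem_univ, true_and] at hK
  have hfib : (Finset.univ.filter
      (fun p : (Fin n → Fin n) × (Fin n → Fin n) => p.1 ≠ p.2)).filter
      (fun p => key p = K)
      = Finset.univ.filter (fun p : (Fin n → Fin n) × (Fin n → Fin n) => key p = K) := by
    ext ⟨f, g⟩
    simp only [mem_filter, mem_univ, true_and, and_iff_right_iff_imp]
    intro h
    obtain ⟨i, hi⟩ := hK
    have : i ∈ key (f, g) := h ▸ hi
    simp only [hkey, mem_filter, mem_univ, true_and] at this
    exact fun hfg => this (by rw [hfg])
  rw [hfib]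
  -- second fibering: restriction to K
  set ψ : ((Fin n → Fin n) × (Fin n → Fin n)) →
      (({i : Fin n // i ∈ K} → Fin n) × ({i : Fin n // i ∈ K} → Fin n)) :=
    fun p => (fun i => p.1 i.1, fun i => p.2 i.1) with hψ
  set T := Finset.univ.filter
      (fun p : ({i : Fin n // i ∈ K} → Fin n) × ({i : Fin n // i ∈ K} → Fin n) =>
        ∀ i, p.1 i ≠ p.2 i) with hT
  have hmaps2 : ∀ p ∈ Finset.univ.filter
      (fun p : (Fin n → Fin n) × (Fin n → Fin n) => key p = K), ψ p ∈ T := by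
    rintro ⟨f, g⟩ hp
    simp only [mem_filter, mem_univ, true_and] at hp
    simp only [hT, mem_filter, mem_univ, true_and, hψ]
    rintro ⟨i, hi⟩
    rw [← hp] at hi
    simp only [hkey, mem_filter, mem_univ, true_and] at hi
    exact hi
  rw [← Finset.prod_fiberwise_of_maps_to hmaps2, ← Finset.prod_pow]
  refine Finset.prod_congr rfl fun q hq => ?_
  -- each p in the fiber has the same value
  have hval : ∀ p ∈ (Finset.univ.filter
      (fun p : (Fin n → Fin n) × (Fin n → Fin n) => key p = K)).filter
      (fun p => ψ p = q),
      (∑ i : Fin n, ((X (i, p.1 i) - X (i, p.2 i)) : MvPolynomial (Fin n × Fin n) ℂ))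
      = ∑ i : {i : Fin n // i ∈ K},
          ((X (i.1, q.1 i) - X (i.1, q.2 i)) : MvPolynomial (Fin n × Fin n) ℂ) := by
    rintro ⟨f, g⟩ hp
    simp only [mem_filter, mem_univ, true_and] at hp
    obtain ⟨hp1, hp2⟩ := hp
    have hsub : ∑ i : Fin n, ((X (i, f i) - X (i, g i)) : MvPolynomial (Fin n × Fin n) ℂ)
        = ∑ i ∈ K, ((X (i, f i) - X (i, g i)) : MvPolynomial (Fin n × Fin n) ℂ) := by
      rw [← Finset.sum_subset (Finset.subset_univ K)]
      intro i _ hiK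
      rw [← hp1] at hiK
      simp only [hkey, mem_filter, mem_univ, true_and, not_not] at hiK
      rw [hiK, sub_self]
    rw [hsub, ← Finset.sum_attach K
      (fun i => ((X (i, f i) - X (i, g i)) : MvPolynomial (Fin n × Fin n) ℂ))]
    refine Finset.sum_congr rfl fun i _ => ?_
    have h1 : f i.1 = q.1 i := by rw [← hp2]
    have h2 : g i.1 = q.2 i := by rw [← hp2]
    rw [h1, h2]
  rw [Finset.prod_congr rfl hval, Finset.prod_const]
  congr 1
  -- cardinality of the fiber
  have hcard : ((Finset.univ.filter
      (fun p : (Fin n → Fin n) × (Fin n → Fin n) => key p = K)).filter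
      (fun p => ψ p = q)).card
      = (Finset.univ : Finset ({i : Fin n // i ∉ K} → Fin n)).card := by
    simp only [hT, mem_filter, mem_univ, true_and] at hq
    refine Finset.card_bij' (fun p _ => fun i => p.1 i.1)
      (fun h _ => (fun i => if hi : i ∈ K then q.1 ⟨i, hi⟩ else h ⟨i, hi⟩,
                   fun i => if hi : i ∈ K then q.2 ⟨i, hi⟩ else h ⟨i, hi⟩))
      (fun _ _ => Finset.mem_univ _) ?_ ?_ ?_
    · intro h _
      simp only [mem_filter, mem_univ, true_and]
      constructor
      · ext i
        simp only [hkey, mem_filter, mem_univ, true_and]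
        by_cases hi : i ∈ K
        · simp only [dif_pos hi]
          exact ⟨fun _ => hi, fun _ => hq ⟨i, hi⟩⟩
        · simp only [dif_neg hi]
          exact ⟨fun hc => absurd rfl hc, fun hc => absurd hc hi⟩
      · refine Prod.ext (funext fun i => ?_) (funext fun i => ?_) <;>
          simp [hψ, dif_pos i.2]
    · rintro ⟨f, g⟩ hp
      simp only [mem_filter, mem_univ, true_and] at hp
      obtain ⟨hp1, hp2⟩ := hp
      have hf : ∀ i (hi : i ∈ K), f i = q.1 ⟨i, hi⟩ := fun i hi => by rw [← hp2]
      have hg : ∀ i (hi : i ∈ K), g i = q.2 ⟨i, hi⟩ := fun i hi => by rw [← hp2]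
      have hfg : ∀ i, i ∉ K → f i = g i := by
        intro i hi
        rw [← hp1] at hi
        simpa [hkey] using hi
      refine Prod.ext ?_ ?_ <;> simp only
      · ext i
        by_cases hi : i ∈ K
        · simp [dif_pos hi, hf i hi]
        · simp [dif_neg hi]
      · ext i
        by_cases hi : i ∈ K
        · simp [dif_pos hi, hg i hi]
        · simp [dif_neg hi, (hfg i hi).symm]
    · intro h _
      ext ⟨i, hi⟩
      simp [dif_neg hi]
  rw [hcard, Finset.card_univ, Fintype.card_fun, Fintype.card_fin]
  congr 1
  rw [Fintype.card_subtype_compl, Fintype.card_fin, Fintype.card_coe]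
end

section
/- Let n ≥ 1 and let K ⊆ {1,…,n} with |K| ≥ 2. Then the polynomial d = ∏_{(f,g)} Σ_{i∈K} (λ_{i,f(i)} − λ_{i,g(i)}) in ℂ[λ_{i,j} : 1 ≤ i, j ≤ n], where (f,g) ranges over all ordered pairs of functions from K to {1,…,n} with f(i) ≠ g(i) for every i ∈ K, is the square of a polynomial q ∈ ℂ[λ_{i,j}] that is invariant under every substitution λ_{i,j} ↦ λ_{i,σ_i(j)} determined by an arbitrary choice of permutations σ_i of {1,…,n}, one for each i. -/
open MvPolynomial

set_option linter.unusedSectionVars false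

namespace Stmt6Aux

lemma even_card_of_invol {α : Type*} [DecidableEq α] (s : Finset α) (J : α → α) :
    (∀ x ∈ s, J x ∈ s) → (∀ x ∈ s, J (J x) = x) → (∀ x ∈ s, J x ≠ x) → Even s.card := by
  induction s using Finset.strongInduction with
  | _ s ih =>
    intro hmem hinv hne
    rcases s.eq_empty_or_nonempty with rfl | ⟨x, hx⟩
    · simp
    · have hJx : J x ∈ s := hmem x hx
      have hpair : ({x, J x} : Finset α) ⊆ s := by
        intro y hy
        simp only [Finset.mem_insert, Finset.mem_singleton] at hy
        rcases hy with rfl | rfl <;> assumption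
      have hcardpair : ({x, J x} : Finset α).card = 2 := by
        rw [Finset.card_insert_of_notMem (by simp [Ne.symm (hne x hx)]),
          Finset.card_singleton]
      have h2 : 2 ≤ s.card := hcardpair ▸ Finset.card_le_card hpair
      have hss : s \ {x, J x} ⊂ s :=
        Finset.sdiff_ssubset hpair ⟨x, Finset.mem_insert_self _ _⟩
      have heven : Even (s \ {x, J x}).card := by
        refine ih _ hss ?_ ?_ ?_
        · intro y hy
          rw [Finset.mem_sdiff] at hy ⊢
          simp only [Finset.mem_insert, Finset.mem_singleton] at hy ⊢
          push_neg at hy ⊢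
          obtain ⟨hys, hyx, hyJx⟩ := hy
          refine ⟨hmem y hys, ?_, ?_⟩
          · intro h
            apply hyJx
            have := congrArg J h
            rwa [hinv y hys] at this
          · intro h
            apply hyx
            have := congrArg J h
            rwa [hinv y hys, hinv x hx] at this
        · intro y hy; exact hinv y (Finset.mem_sdiff.mp hy).1
        · intro y hy; exact hne y (Finset.mem_sdiff.mp hy).1
      have : s.card = (s \ {x, J x}).card + 2 := by
        rw [Finset.card_sdiff_of_subset hpair, hcardpair]; omega
      rw [this]
      exact heven.add (by norm_num)

variable {n : ℕ} {κ : Type} [Fintype κ] [DecidableEq κ]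

noncomputable def fac (c : κ → Fin n) (p : (κ → Fin n) × (κ → Fin n)) :
    MvPolynomial (Fin n × Fin n) ℂ :=
  ∑ i : κ, (X (c i, p.1 i) - X (c i, p.2 i))

def S (n : ℕ) (κ : Type) [Fintype κ] [DecidableEq κ] :
    Finset ((κ → Fin n) × (κ → Fin n)) :=
  Finset.univ.filter fun p => ∀ i, p.1 i ≠ p.2 i

lemma mem_S {p : (κ → Fin n) × (κ → Fin n)} : p ∈ S n κ ↔ ∀ i, p.1 i ≠ p.2 i := by
  simp [S]

lemma fac_swap (c : κ → Fin n) (p : (κ → Fin n) × (κ → Fin n)) :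
    fac c (p.2, p.1) = - fac c p := by
  simp only [fac, ← Finset.sum_neg_distrib, neg_sub]

def act (c : κ → Fin n) (σ : Fin n → Equiv.Perm (Fin n))
    (p : (κ → Fin n) × (κ → Fin n)) : (κ → Fin n) × (κ → Fin n) :=
  (fun i => σ (c i) (p.1 i), fun i => σ (c i) (p.2 i))

lemma act_act (c : κ → Fin n) (σ : Fin n → Equiv.Perm (Fin n)) (p) :
    act c (fun j => (σ j)⁻¹) (act c σ p) = p := by
  unfold act
  exact Prod.ext (funext fun i => Equiv.symm_apply_apply _ _)
    (funext fun i => Equiv.symm_apply_apply _ _)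

lemma act_act' (c : κ → Fin n) (σ : Fin n → Equiv.Perm (Fin n)) (p) :
    act c σ (act c (fun j => (σ j)⁻¹) p) = p := by
  unfold act
  exact Prod.ext (funext fun i => Equiv.apply_symm_apply _ _)
    (funext fun i => Equiv.apply_symm_apply _ _)

lemma act_mem_S (c : κ → Fin n) (σ : Fin n → Equiv.Perm (Fin n)) {p}
    (hp : p ∈ S n κ) : act c σ p ∈ S n κ := by
  rw [mem_S] at hp ⊢
  intro i
  exact fun h => hp i ((σ (c i)).injective h)

lemma rename_fac (c : κ → Fin n) (σ : Fin n → Equiv.Perm (Fin n)) (p) :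
    rename (fun ij : Fin n × Fin n => (ij.1, σ ij.1 ij.2)) (fac c p)
      = fac c (act c σ p) := by
  simp [fac, act]

/-- The swap-at-`i₁` involution. -/
def J (i₁ : κ) (p : (κ → Fin n) × (κ → Fin n)) : (κ → Fin n) × (κ → Fin n) :=
  (Function.update p.1 i₁ (p.2 i₁), Function.update p.2 i₁ (p.1 i₁))

lemma J_mem_S (i₁ : κ) {p} (hp : p ∈ S n κ) : J i₁ p ∈ S n κ := by
  rw [mem_S] at hp ⊢
  intro i
  rcases eq_or_ne i i₁ with rfl | h
  · simpa [J] using (hp i).symm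
  · simpa [J, Function.update_of_ne h] using hp i

lemma J_J (i₁ : κ) (p : (κ → Fin n) × (κ → Fin n)) : J i₁ (J i₁ p) = p := by
  unfold J
  simp

lemma J_ne (i₁ : κ) {p} (hp : p ∈ S n κ) : J i₁ p ≠ p := by
  intro h
  have := congrArg (fun q => q.1 i₁) h
  simp only [J, Function.update_self] at this
  exact (mem_S.mp hp i₁) this.symm

lemma J_val₁ {i₀ i₁ : κ} (h : i₀ ≠ i₁) (p : (κ → Fin n) × (κ → Fin n)) :
    (J i₁ p).1 i₀ = p.1 i₀ := Function.update_of_ne h _ _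

lemma J_val₂ {i₀ i₁ : κ} (h : i₀ ≠ i₁) (p : (κ → Fin n) × (κ → Fin n)) :
    (J i₁ p).2 i₀ = p.2 i₀ := Function.update_of_ne h _ _

lemma even_card_SQ {i₀ i₁ : κ} (h01 : i₀ ≠ i₁) (Q : Fin n → Fin n → Prop)
    [∀ x y, Decidable (Q x y)] :
    Even ((S n κ).filter fun p => Q (p.1 i₀) (p.2 i₀)).card := by
  refine even_card_of_invol _ (J i₁) ?_ ?_ ?_
  · intro p hp
    rw [Finset.mem_filter] at hp ⊢
    exact ⟨J_mem_S i₁ hp.1, by rw [J_val₁ h01, J_val₂ h01]; exact hp.2⟩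
  · intro p _; exact J_J i₁ p
  · intro p hp; exact J_ne i₁ (Finset.mem_filter.mp hp).1

end Stmt6Aux

open Stmt6Aux in
/-- for `K ⊆ [n]` with `|K| ≥ 2`, the polynomial
`d = ∏_{(f,g) : K → [n], ∀ i ∈ K, f i ≠ g i} ∑_{i ∈ K} (λ_{i,f(i)} − λ_{i,g(i)})`
is the square of a polynomial `q` that is invariant under every substitution
`λ_{i,j} ↦ λ_{i,σ_i(j)}` given by a choice of permutations `σ_i` of `[n]`. -/
theorem stmt6 (n : ℕ) (hn : 1 ≤ n) (K : Finset (Fin n)) (hK : 2 ≤ K.card) :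
    ∃ q : MvPolynomial (Fin n × Fin n) ℂ,
      (∏ p ∈ Finset.univ.filter
          (fun p : ({i : Fin n // i ∈ K} → Fin n) × ({i : Fin n // i ∈ K} → Fin n) =>
            ∀ i, p.1 i ≠ p.2 i),
        ∑ i : {i : Fin n // i ∈ K},
          ((X (i.1, p.1 i) - X (i.1, p.2 i)) : MvPolynomial (Fin n × Fin n) ℂ)) = q ^ 2 ∧
      ∀ σ : Fin n → Equiv.Perm (Fin n),
        rename (fun ij : Fin n × Fin n => (ij.1, σ ij.1 ij.2)) q = q := by
  classical
  set κ := {i : Fin n // i ∈ K} with hκ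
  obtain ⟨a, ha, b, hb, hab⟩ := Finset.one_lt_card.mp (by omega : 1 < K.card)
  set i₀ : κ := ⟨a, ha⟩
  set i₁ : κ := ⟨b, hb⟩
  have h01 : i₀ ≠ i₁ := fun h => hab (congrArg Subtype.val h)
  set c : κ → Fin n := Subtype.val with hc
  set T : Finset ((κ → Fin n) × (κ → Fin n)) :=
    (S n κ).filter (fun p => p.1 i₀ < p.2 i₀) with hT
  refine ⟨∏ p ∈ T, fac c p, ?_, ?_⟩
  · -- the square identity
    have hd : (∏ p ∈ Finset.univ.filter
          (fun p : (κ → Fin n) × (κ → Fin n) => ∀ i, p.1 i ≠ p.2 i),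
        ∑ i : κ, ((X (i.1, p.1 i) - X (i.1, p.2 i)) : MvPolynomial (Fin n × Fin n) ℂ))
        = ∏ p ∈ S n κ, fac c p := rfl
    rw [hd, ← Finset.prod_filter_mul_prod_filter_not (S n κ) (fun p => p.1 i₀ < p.2 i₀)]
    have hflip : ∏ p ∈ (S n κ).filter (fun p => ¬ p.1 i₀ < p.2 i₀), fac c p
        = ∏ p ∈ T, fac c (p.2, p.1) := by
      refine (Finset.prod_nbij' (fun p => (p.2, p.1)) (fun p => (p.2, p.1)) ?_ ?_ ?_ ?_ ?_).symm
      · intro p hp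
        rw [hT, Finset.mem_filter] at hp
        rw [Finset.mem_filter]
        refine ⟨mem_S.mpr fun i => (mem_S.mp hp.1 i).symm, ?_⟩
        exact not_lt_of_gt hp.2
      · intro p hp
        rw [Finset.mem_filter] at hp
        rw [hT, Finset.mem_filter]
        refine ⟨mem_S.mpr fun i => (mem_S.mp hp.1 i).symm, ?_⟩
        exact ((mem_S.mp hp.1 i₀).lt_or_gt).resolve_left hp.2
      · intro p _; rfl
      · intro p _; rfl
      · intro p _; rfl
    rw [hflip]
    have : ∏ p ∈ T, fac c (p.2, p.1) = (-1) ^ T.card * ∏ p ∈ T, fac c p := by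
      rw [← Finset.prod_const, ← Finset.prod_mul_distrib]
      exact Finset.prod_congr rfl fun p _ => by rw [fac_swap]; ring
    rw [this]
    have heven : Even T.card := even_card_SQ h01 (fun x y => x < y)
    rw [heven.neg_one_pow, one_mul, sq]
  · -- invariance
    intro σ
    rw [map_prod]
    have h1 : ∏ p ∈ T, rename (fun ij : Fin n × Fin n => (ij.1, σ ij.1 ij.2)) (fac c p)
        = ∏ p ∈ T, fac c (act c σ p) := Finset.prod_congr rfl fun p _ => rename_fac c σ p
    rw [h1]
    set h : ((κ → Fin n) × (κ → Fin n)) → ((κ → Fin n) × (κ → Fin n)) :=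
      fun p => if (act c σ p).1 i₀ < (act c σ p).2 i₀ then act c σ p
        else ((act c σ p).2, (act c σ p).1) with hh
    set σ' : Fin n → Equiv.Perm (Fin n) := fun j => (σ j)⁻¹ with hσ'
    set h' : ((κ → Fin n) × (κ → Fin n)) → ((κ → Fin n) × (κ → Fin n)) :=
      fun p => if (act c σ' p).1 i₀ < (act c σ' p).2 i₀ then act c σ' p
        else ((act c σ' p).2, (act c σ' p).1) with hh'
    have step1 : ∏ p ∈ T, fac c (act c σ p)
        = ∏ p ∈ T, ((if (act c σ p).1 i₀ < (act c σ p).2 i₀ then (1 : MvPolynomial (Fin n × Fin n) ℂ) else -1) * fac c (h p)) := by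
      refine Finset.prod_congr rfl fun p _ => ?_
      by_cases hcond : (act c σ p).1 i₀ < (act c σ p).2 i₀
      · have hpe : h p = act c σ p := by simp only [hh, if_pos hcond]
        rw [hpe, if_pos hcond, one_mul]
      · have hpe : h p = ((act c σ p).2, (act c σ p).1) := by simp only [hh, if_neg hcond]
        rw [hpe, if_neg hcond, fac_swap]; ring
    rw [step1, Finset.prod_mul_distrib]
    have step2 : ∏ p ∈ T, (if (act c σ p).1 i₀ < (act c σ p).2 i₀ then (1 : MvPolynomial (Fin n × Fin n) ℂ) else -1) = 1 := by
      rw [Finset.prod_ite, Finset.prod_const_one, Finset.prod_const, one_mul]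
      have hTT : T.filter (fun p => ¬ (act c σ p).1 i₀ < (act c σ p).2 i₀)
          = (S n κ).filter (fun p =>
              (fun x y : Fin n => x < y ∧ ¬ σ (c i₀) x < σ (c i₀) y) (p.1 i₀) (p.2 i₀)) := by
        rw [hT, Finset.filter_filter]
        rfl
      rw [hTT]
      exact (even_card_SQ h01 (fun x y => x < y ∧ ¬ σ (c i₀) x < σ (c i₀) y)).neg_one_pow
    rw [step2, one_mul]
    -- now the reindexing bijection
    refine Finset.prod_nbij' h h' ?_ ?_ ?_ ?_ ?_
    · intro p hp
      have hpS : p ∈ S n κ := (Finset.mem_filter.mp hp).1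
      have hS' : act c σ p ∈ S n κ := act_mem_S c σ hpS
      by_cases hcond : (act c σ p).1 i₀ < (act c σ p).2 i₀
      · have hpe : h p = act c σ p := by simp only [hh, if_pos hcond]
        rw [hpe]
        exact Finset.mem_filter.mpr ⟨hS', hcond⟩
      · have hpe : h p = ((act c σ p).2, (act c σ p).1) := by simp only [hh, if_neg hcond]
        rw [hpe]
        refine Finset.mem_filter.mpr ⟨mem_S.mpr fun i => (mem_S.mp hS' i).symm, ?_⟩
        exact ((mem_S.mp hS' i₀).lt_or_gt).resolve_left hcond
    · intro p hp
      have hpS : p ∈ S n κ := (Finset.mem_filter.mp hp).1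
      have hS' : act c σ' p ∈ S n κ := act_mem_S c σ' hpS
      by_cases hcond : (act c σ' p).1 i₀ < (act c σ' p).2 i₀
      · have hpe : h' p = act c σ' p := by simp only [hh', if_pos hcond]
        rw [hpe]
        exact Finset.mem_filter.mpr ⟨hS', hcond⟩
      · have hpe : h' p = ((act c σ' p).2, (act c σ' p).1) := by simp only [hh', if_neg hcond]
        rw [hpe]
        refine Finset.mem_filter.mpr ⟨mem_S.mpr fun i => (mem_S.mp hS' i).symm, ?_⟩
        exact ((mem_S.mp hS' i₀).lt_or_gt).resolve_left hcond
    · -- left inverse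
      intro p hp
      have hpT := Finset.mem_filter.mp hp
      by_cases hcond : (act c σ p).1 i₀ < (act c σ p).2 i₀
      · have hpe : h p = act c σ p := by simp only [hh, if_pos hcond]
        rw [hpe]
        simp only [hh']
        rw [act_act, if_pos hpT.2]
      · have hpe : h p = ((act c σ p).2, (act c σ p).1) := by simp only [hh, if_neg hcond]
        rw [hpe]
        simp only [hh']
        have e2 : act c σ' ((act c σ p).2, (act c σ p).1)
            = ((act c σ' (act c σ p)).2, (act c σ' (act c σ p)).1) := rfl
        rw [e2, act_act, if_neg (not_lt_of_gt hpT.2)]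
    · -- right inverse
      intro p hp
      have hpT := Finset.mem_filter.mp hp
      by_cases hcond : (act c σ' p).1 i₀ < (act c σ' p).2 i₀
      · have hpe : h' p = act c σ' p := by simp only [hh', if_pos hcond]
        rw [hpe]
        simp only [hh]
        rw [act_act', if_pos hpT.2]
      · have hpe : h' p = ((act c σ' p).2, (act c σ' p).1) := by simp only [hh', if_neg hcond]
        rw [hpe]
        simp only [hh]
        have e2 : act c σ ((act c σ' p).2, (act c σ' p).1)
            = ((act c σ (act c σ' p)).2, (act c σ (act c σ' p)).1) := rfl
        rw [e2, act_act', if_neg (not_lt_of_gt hpT.2)]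
    · intro p _; rfl
end

section
/- Let p be a polynomial in ℂ[x_1,…,x_b]. Then p is not squarefree if and only if there exists a non-unit polynomial q ∈ ℂ[x_1,…,x_b] such that q divides p and q divides the partial derivative ∂p/∂x_i for every i ∈ {1,…,b}. -/
open MvPolynomial Finsupp

namespace Stmt10Aux

variable {b : ℕ}

lemma degree_add' (u v : Fin b →₀ ℕ) : (u + v).degree = u.degree + v.degree := by
  simp [Finsupp.degree_eq_weight_one, map_add]

lemma degree_single' (i : Fin b) : (Finsupp.single i 1).degree = 1 := by
  simp [Finsupp.degree_apply, Finsupp.support_single_ne_zero i one_ne_zero]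

lemma degree_le_totalDegree {f : MvPolynomial (Fin b) ℂ} {s : Fin b →₀ ℕ}
    (h : coeff s f ≠ 0) : s.degree ≤ f.totalDegree := by
  have := MvPolynomial.le_totalDegree (p := f) (s := s) (MvPolynomial.mem_support_iff.mpr h)
  simpa [Finsupp.degree_apply, Finsupp.sum] using this

lemma totalDegree_eq_sup (f : MvPolynomial (Fin b) ℂ) :
    f.totalDegree = f.support.sup fun s => s.degree := rfl

lemma coeff_pderiv (i : Fin b) (f : MvPolynomial (Fin b) ℂ) (e : Fin b →₀ ℕ) :
    coeff e (pderiv i f) = ((e i : ℂ) + 1) * coeff (e + Finsupp.single i 1) f := by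
  induction f using MvPolynomial.induction_on' with
  | monomial s a =>
    rw [pderiv_monomial]
    by_cases h : s = e + Finsupp.single i 1
    · subst h
      rw [coeff_monomial, coeff_monomial, if_pos rfl, if_pos (add_tsub_cancel_right _ _)]
      have : (e + Finsupp.single i 1 : Fin b →₀ ℕ) i = e i + 1 := by
        simp
      rw [this]
      push_cast
      ring
    · have hRHS : coeff (e + Finsupp.single i 1) ((monomial s) a) = 0 := by
        rw [coeff_monomial, if_neg h]
      rw [hRHS, mul_zero]
      by_cases hsi : s i = 0
      · simp [hsi]
      · rw [coeff_monomial, if_neg]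
        intro heq
        apply h
        have hle : Finsupp.single i 1 ≤ s :=
          Finsupp.single_le_iff.mpr (Nat.one_le_iff_ne_zero.mpr hsi)
        rw [← heq, tsub_add_cancel_of_le hle]
  | add p q hp hq =>
    rw [map_add, coeff_add, coeff_add, hp, hq, mul_add]

lemma exists_pderiv_ne {f : MvPolynomial (Fin b) ℂ} (hf : f.totalDegree ≠ 0) :
    ∃ i, pderiv i f ≠ 0 := by
  by_contra h
  push_neg at h
  apply hf
  rw [MvPolynomial.totalDegree_eq_zero_iff]
  intro m hm x
  by_contra hx
  have key := coeff_pderiv x f (m - Finsupp.single x 1)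
  have hle : Finsupp.single x 1 ≤ m :=
    Finsupp.single_le_iff.mpr (Nat.one_le_iff_ne_zero.mpr hx)
  rw [tsub_add_cancel_of_le hle, h x, coeff_zero] at key
  have hne : (((m - Finsupp.single x 1 : Fin b →₀ ℕ) x : ℕ) : ℂ) + 1 ≠ 0 :=
    Nat.cast_add_one_ne_zero _
  exact MvPolynomial.mem_support_iff.mp hm ((mul_eq_zero.mp key.symm).resolve_left hne)

lemma totalDegree_pderiv_lt (i : Fin b) (f : MvPolynomial (Fin b) ℂ)
    (h : pderiv i f ≠ 0) : (pderiv i f).totalDegree < f.totalDegree := by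
  obtain ⟨d, hd, hsup⟩ := Finset.exists_mem_eq_sup (pderiv i f).support
    (support_nonempty.mpr h) (fun s => s.degree)
  have hcoeff : coeff d (pderiv i f) ≠ 0 := MvPolynomial.mem_support_iff.mp hd
  rw [coeff_pderiv] at hcoeff
  have h2 : coeff (d + Finsupp.single i 1) f ≠ 0 := right_ne_zero_of_mul hcoeff
  have h3 := degree_le_totalDegree h2
  rw [degree_add', degree_single'] at h3
  have h4 : (pderiv i f).totalDegree = d.degree := by
    rw [totalDegree_eq_sup, hsup]
  omega

lemma hc_top_ne_zero (f : MvPolynomial (Fin b) ℂ) (hf : f ≠ 0) :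
    homogeneousComponent f.totalDegree f ≠ 0 := by
  obtain ⟨d, hd, hsup⟩ := Finset.exists_mem_eq_sup f.support
    (support_nonempty.mpr hf) (fun s => s.degree)
  intro h0
  have hc := coeff_homogeneousComponent f.totalDegree f d
  rw [h0, coeff_zero, if_pos (by rw [totalDegree_eq_sup, hsup])] at hc
  exact MvPolynomial.mem_support_iff.mp hd hc.symm

lemma hc_mul (a c : MvPolynomial (Fin b) ℂ) :
    homogeneousComponent (a.totalDegree + c.totalDegree) (a * c) =
      homogeneousComponent a.totalDegree a * homogeneousComponent c.totalDegree c := by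
  classical
  ext d
  rw [coeff_homogeneousComponent, coeff_mul, coeff_mul]
  by_cases hd : d.degree = a.totalDegree + c.totalDegree
  · rw [if_pos hd]
    apply Finset.sum_congr rfl
    rintro ⟨u, v⟩ huv
    dsimp only
    have huv' : u + v = d := Finset.HasAntidiagonal.mem_antidiagonal.mp huv
    have hdeg : u.degree + v.degree = a.totalDegree + c.totalDegree := by
      rw [← hd, ← huv', degree_add']
    rw [coeff_homogeneousComponent, coeff_homogeneousComponent]
    by_cases hu : u.degree = a.totalDegree
    · rw [if_pos hu, if_pos (by omega)]
    · rw [if_neg hu]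
      rcases lt_or_gt_of_ne hu with hlt | hgt
      · have hv : c.totalDegree < v.degree := by omega
        have hvc : coeff v c = 0 := by
          by_contra hvc
          exact absurd (degree_le_totalDegree hvc) (by omega)
        simp [hvc]
      · have hua : coeff u a = 0 := by
          by_contra hua
          exact absurd (degree_le_totalDegree hua) (by omega)
        simp [hua]
  · rw [if_neg hd]
    symm
    apply Finset.sum_eq_zero
    rintro ⟨u, v⟩ huv
    dsimp only
    have huv' : u + v = d := Finset.HasAntidiagonal.mem_antidiagonal.mp huv
    rw [coeff_homogeneousComponent, coeff_homogeneousComponent]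
    by_cases hu : u.degree = a.totalDegree
    · rw [if_pos hu,
        if_neg (fun hv => hd (by rw [← huv', degree_add', hu, hv])), mul_zero]
    · rw [if_neg hu, zero_mul]

lemma totalDegree_le_of_dvd {a c : MvPolynomial (Fin b) ℂ} (h : a ∣ c) (hc : c ≠ 0) :
    a.totalDegree ≤ c.totalDegree := by
  obtain ⟨s, rfl⟩ := h
  have ha : a ≠ 0 := left_ne_zero_of_mul hc
  have hs : s ≠ 0 := right_ne_zero_of_mul hc
  by_contra hlt
  push_neg at hlt
  have hz := homogeneousComponent_eq_zero (a.totalDegree + s.totalDegree) (a * s) (by omega)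
  rw [hc_mul] at hz
  exact mul_ne_zero (hc_top_ne_zero a ha) (hc_top_ne_zero s hs) hz

lemma key (p q : MvPolynomial (Fin b) ℂ) (hp : Squarefree p) (hqp : q ∣ p)
    (hqd : ∀ i, q ∣ pderiv i p) : IsUnit q := by
  by_contra hq
  have hp0 : p ≠ 0 := by rintro rfl; exact not_squarefree_zero hp
  have hq0 : q ≠ 0 := by rintro rfl; exact hp0 (zero_dvd_iff.mp hqp)
  obtain ⟨π, hirr, hπq⟩ := WfDvdMonoid.exists_irreducible_factor hq hq0
  have hprime : Prime π := UniqueFactorizationMonoid.irreducible_iff_prime.mp hirr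
  have hπp : π ∣ p := hπq.trans hqp
  obtain ⟨s, rfl⟩ := hπp
  have hπs : ¬ π ∣ s := fun hdvd =>
    hprime.not_unit (hp π (mul_dvd_mul_left π hdvd))
  have hπd : ∀ i, pderiv i π = 0 := by
    intro i
    have h1 : π ∣ pderiv i (π * s) := hπq.trans (hqd i)
    rw [pderiv_mul] at h1
    have h2 : π ∣ pderiv i π * s := by
      have h' : π ∣ π * pderiv i s := dvd_mul_right π _
      simpa using dvd_sub h1 h'
    have h3 : π ∣ pderiv i π := (hprime.dvd_mul.mp h2).resolve_right hπs
    by_contra hne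
    exact absurd (totalDegree_le_of_dvd h3 hne)
      (not_le.mpr (totalDegree_pderiv_lt i π hne))
  have hπ0 : π.totalDegree = 0 := by
    by_contra h
    obtain ⟨i, hi⟩ := exists_pderiv_ne h
    exact hi (hπd i)
  have hπC : π = MvPolynomial.C (coeff 0 π) := by
    have hsum := sum_homogeneousComponent π
    rw [hπ0] at hsum
    simpa [homogeneousComponent_zero] using hsum.symm
  have hcoe : coeff 0 π ≠ 0 := by
    intro h0
    apply hprime.ne_zero
    rw [hπC, h0, map_zero]
  have : IsUnit π := by
    rw [hπC]
    refine isUnit_iff_exists_inv.mpr ⟨MvPolynomial.C (coeff 0 π)⁻¹, ?_⟩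
    rw [← map_mul, mul_inv_cancel₀ hcoe, map_one]
  exact hprime.not_unit this

end Stmt10Aux

/-- a polynomial `p ∈ ℂ[x_1, …, x_b]` is not squarefree iff there is a
non-unit `q` dividing `p` and all the partial derivatives `∂p/∂x_i`. -/
theorem stmt10 (b : ℕ) (p : MvPolynomial (Fin b) ℂ) :
    ¬ Squarefree p ↔
      ∃ q : MvPolynomial (Fin b) ℂ, ¬ IsUnit q ∧ q ∣ p ∧
        ∀ i : Fin b, q ∣ MvPolynomial.pderiv i p := by
  constructor
  · intro h
    rw [Squarefree] at h
    push_neg at h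
    obtain ⟨x, hx2, hxu⟩ := h
    refine ⟨x, hxu, (dvd_mul_right x x).trans hx2, fun i => ?_⟩
    obtain ⟨c, rfl⟩ := hx2
    have h1 : x ∣ MvPolynomial.pderiv i (x * x) := by
      rw [MvPolynomial.pderiv_mul]
      exact dvd_add (dvd_mul_left x _) (dvd_mul_right x _)
    rw [MvPolynomial.pderiv_mul]
    exact dvd_add (h1.mul_right c) (((dvd_mul_right x x)).mul_right _)
  · rintro ⟨q, hqu, hqp, hqd⟩ hsf
    exact hqu (Stmt10Aux.key p q hsf hqp hqd)
end

section
/- Let n, l ≥ 1 and let k_1,…,k_l be integers with 1 ≤ k_i ≤ n. In the polynomial ring ℂ[λ_{i,j} : 1 ≤ i ≤ l, 1 ≤ j ≤ n] the identity ∏_{F≠G} Σ_{i=1}^l ( Σ_{j∈F(i)} λ_{i,j} − Σ_{j∈G(i)} λ_{i,j} ) = ∏_{k'} ( ∏_{(F,G)} Σ_{i=1}^l ( Σ_{j∈F(i)} λ_{i,j} − Σ_{j∈G(i)} λ_{i,j} ) )^{∏_i C(n−2k'_i, k_i−k'_i)} holds, where on the left-hand side (F,G) ranges over all ordered pairs of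 distinct functions assigning to each i ∈ {1,…,l} a k_i-element subset of {1,…,n}; on the right-hand side k' = (k'_1,…,k'_l) ranges over all tuples of integers with 0 ≤ k'_i ≤ k_i that are not all zero, and for each such k', (F,G) ranges over all ordered pairs of functions assigning to each i ∈ {1,…,l} a k'_i-element subset of {1,…,n} such that F(i) ∩ G(i) = ∅ for every i. -/
/-!
The linear form of a pair `(F, G)` depends only on the pair of disjoint families
`(F', G') = (F \ G, G \ F)`, whose sizes `k'ᵢ ≤ kᵢ` are not all zero exactly when `F ≠ G`.
Conversely `(F, G)` is recovered from `(F', G')` and the common part `Cᵢ = F(i) ∩ G(i)`, which is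
an arbitrary `(kᵢ - k'ᵢ)`-subset of the `(n - 2k'ᵢ)`-element complement of `F'(i) ∪ G'(i)`.
Hence every factor of the right-hand side occurs `∏ᵢ C(n - 2k'ᵢ, kᵢ - k'ᵢ)` times on the left.
-/

open MvPolynomial Finset

namespace Finset

variable {α : Type*} [DecidableEq α]

lemma union_sdiff_union_of_disjoint {s t u : Finset α} (hst : Disjoint s t)
    (hsu : Disjoint s u) : (s ∪ u) \ (t ∪ u) = s := by
  grind [disjoint_left]

lemma union_inter_union_of_disjoint {s t u : Finset α} (hst : Disjoint s t) :
    (s ∪ u) ∩ (t ∪ u) = u := by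
  rw [← inter_union_distrib_right, disjoint_iff_inter_eq_empty.1 hst, empty_union]

end Finset

namespace FamilyPairs

variable {ι α : Type*}

abbrev SizedFamily (α : Type*) (k : ι → ℕ) : Type _ := ∀ i, {s : Finset α // #s = k i}

abbrev SizedFamily.sets {k : ι → ℕ} (F : SizedFamily α k) : ι → Finset α := fun i => (F i).1

abbrev ReducedPair (α : Type*) (k : ι → ℕ) : Type _ :=
  Σ k' : ∀ i, Fin (k i + 1),
    SizedFamily α (fun i => (k' i : ℕ)) × SizedFamily α (fun i => (k' i : ℕ))

variable {k : ι → ℕ}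

@[simp]
lemma SizedFamily.card_sets (F : SizedFamily α k) (i : ι) : #(F.sets i) = k i :=
  (F i).2

def ReducedPair.sets (z : ReducedPair α k) : (ι → Finset α) × (ι → Finset α) :=
  (z.2.1.sets, z.2.2.sets)

lemma ReducedPair.sets_injective :
    Function.Injective (ReducedPair.sets (α := α) (k := k)) := by
  rintro ⟨k₁, F₁, G₁⟩ ⟨k₂, F₂, G₂⟩ h
  simp only [ReducedPair.sets, SizedFamily.sets, Prod.mk.injEq, funext_iff] at h
  obtain rfl : k₁ = k₂ :=
    funext fun i => Fin.ext <| (F₁ i).2.symm.trans (by rw [h.1 i]; exact (F₂ i).2)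
  simp only [Sigma.mk.injEq, heq_eq_eq, Prod.mk.injEq, funext_iff, Subtype.ext_iff, true_and]
  exact h

variable [DecidableEq α]

def sdiffPair (x : SizedFamily α k × SizedFamily α k) : ReducedPair α k :=
  ⟨fun i => ⟨#(x.1.sets i \ x.2.sets i),
      Nat.lt_succ_of_le ((card_le_card sdiff_subset).trans (x.1 i).2.le)⟩,
    fun i => ⟨x.1.sets i \ x.2.sets i, rfl⟩,
    fun i => ⟨x.2.sets i \ x.1.sets i, card_sdiff_comm ((x.2 i).2.trans (x.1 i).2.symm)⟩⟩

lemma sets_sdiffPair (x : SizedFamily α k × SizedFamily α k) :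
    (sdiffPair x).sets = (fun i => x.1.sets i \ x.2.sets i, fun i => x.2.sets i \ x.1.sets i) :=
  rfl

lemma exists_sdiffPair_ne_zero_iff {x : SizedFamily α k × SizedFamily α k} :
    (∃ i, ((sdiffPair x).1 i : ℕ) ≠ 0) ↔ x.1 ≠ x.2 := by
  have sdiffPair_eq_zero_iff (i : ι) : ((sdiffPair x).1 i : ℕ) = 0 ↔ x.1 i = x.2 i := by
    rw [Subtype.ext_iff, ← subset_iff_eq_of_card_le ((x.2 i).2.trans (x.1 i).2.symm).le,
      ← sdiff_eq_empty_iff_subset, ← card_eq_zero]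
    rfl
  simp only [ne_eq, sdiffPair_eq_zero_iff, funext_iff, not_forall]

variable [Fintype ι] [DecidableEq ι] [Fintype α]

def commonParts (z : ReducedPair α k) : Finset (ι → Finset α) :=
  Fintype.piFinset fun i => powersetCard (k i - z.1 i) (z.2.1.sets i ∪ z.2.2.sets i)ᶜ

lemma mem_commonParts {z : ReducedPair α k} {C : ι → Finset α} :
    C ∈ commonParts z ↔
      ∀ i, Disjoint (C i) (z.2.1.sets i ∪ z.2.2.sets i) ∧ #(C i) = k i - z.1 i := by
  simp only [commonParts, Fintype.mem_piFinset, mem_powersetCard,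
    subset_compl_iff_disjoint_right]

lemma card_commonParts (z : ReducedPair α k) (hz : ∀ i, Disjoint (z.2.1.sets i) (z.2.2.sets i)) :
    #(commonParts z) = ∏ i, (Fintype.card α - 2 * z.1 i).choose (k i - z.1 i) := by
  simp only [commonParts, Fintype.card_piFinset, card_powersetCard, card_compl,
    card_union_of_disjoint (hz _), SizedFamily.card_sets, two_mul]

lemma card_union_of_mem_commonParts {z : ReducedPair α k} {C : ι → Finset α}
    (hC : C ∈ commonParts z) {i : ι} {s : Finset α} (hs : s ⊆ z.2.1.sets i ∪ z.2.2.sets i)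
    (hs_card : #s = z.1 i) : #(s ∪ C i) = k i := by
  obtain ⟨hdisj, hcard⟩ := mem_commonParts.1 hC i
  rw [card_union_of_disjoint (hdisj.mono_right hs).symm, hs_card, hcard]
  have := (z.1 i).isLt
  omega

lemma card_filter_sdiffPair_eq (z : ReducedPair α k)
    (hz : ∀ i, Disjoint (z.2.1.sets i) (z.2.2.sets i)) :
    #{x | sdiffPair x = z} = ∏ i, (Fintype.card α - 2 * z.1 i).choose (k i - z.1 i) := by
  rw [← card_commonParts z hz]
  refine card_bij' (fun x _ i => x.1.sets i ∩ x.2.sets i)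
    (fun C hC =>
      (fun i => ⟨z.2.1.sets i ∪ C i,
        card_union_of_mem_commonParts hC subset_union_left (SizedFamily.card_sets _ i)⟩,
      fun i => ⟨z.2.2.sets i ∪ C i,
        card_union_of_mem_commonParts hC subset_union_right (SizedFamily.card_sets _ i)⟩))
    ?_ ?_ ?_ ?_
  · intro x hx
    obtain rfl := (mem_filter.1 hx).2
    refine mem_commonParts.2 fun i => ⟨?_, ?_⟩
    · exact disjoint_union_right.2 ⟨(disjoint_sdiff_inter _ _).symm,
        inter_comm (x.1.sets i) _ ▸ (disjoint_sdiff_inter _ _).symm⟩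
    · have := card_sdiff_add_card_inter (x.1.sets i) (x.2.sets i)
      simp only [SizedFamily.card_sets] at this
      change _ = k i - #(x.1.sets i \ x.2.sets i)
      omega
  · intro C hC
    refine mem_filter.2 ⟨mem_univ _, ReducedPair.sets_injective ?_⟩
    have hdisj i := (mem_commonParts.1 hC i).1
    rw [sets_sdiffPair]
    refine Prod.ext (funext fun i => ?_) (funext fun i => ?_)
    · exact union_sdiff_union_of_disjoint (hz i) ((hdisj i).mono_right subset_union_left).symm
    · exact union_sdiff_union_of_disjoint (hz i).symm
        ((hdisj i).mono_right subset_union_right).symm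
  · intro x hx
    obtain rfl := (mem_filter.1 hx).2
    refine Prod.ext (funext fun i => Subtype.ext ?_) (funext fun i => Subtype.ext ?_)
    · exact sdiff_union_inter _ _
    · change x.2.sets i \ x.1.sets i ∪ x.1.sets i ∩ x.2.sets i = x.2.sets i
      rw [inter_comm, sdiff_union_inter]
  · intro C _
    funext i
    exact union_inter_union_of_disjoint (hz i)

theorem prod_ne_eq_prod_disjoint_pow {M : Type*} [CommMonoid M]
    (g : (ι → Finset α) → (ι → Finset α) → M)
    (hg : ∀ F G, g F G = g (fun i => F i \ G i) (fun i => G i \ F i)) :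
    ∏ p ∈ univ.filter (fun p : SizedFamily α k × SizedFamily α k => p.1 ≠ p.2),
        g p.1.sets p.2.sets =
      ∏ k' ∈ univ.filter (fun k' : ∀ i, Fin (k i + 1) => ∃ i, (k' i : ℕ) ≠ 0),
        (∏ p ∈ univ.filter (fun p : SizedFamily α (fun i => (k' i : ℕ)) ×
              SizedFamily α (fun i => (k' i : ℕ)) => ∀ i, (p.1 i).1 ∩ (p.2 i).1 = ∅),
            g p.1.sets p.2.sets) ^
          ∏ i, (Fintype.card α - 2 * k' i).choose (k i - k' i) := by
  set A := univ.filter fun p : SizedFamily α k × SizedFamily α k => p.1 ≠ p.2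
  set S := (univ.filter fun k' : ∀ i, Fin (k i + 1) => ∃ i, (k' i : ℕ) ≠ 0).sigma fun k' =>
    univ.filter fun p : SizedFamily α (fun i => (k' i : ℕ)) ×
      SizedFamily α (fun i => (k' i : ℕ)) => ∀ i, (p.1 i).1 ∩ (p.2 i).1 = ∅
  have mem_S (z : ReducedPair α k) :
      z ∈ S ↔ (∃ i, (z.1 i : ℕ) ≠ 0) ∧ ∀ i, Disjoint (z.2.1.sets i) (z.2.2.sets i) := by
    simp [S, disjoint_iff_inter_eq_empty]
  have maps_to (x) (hx : x ∈ A) : sdiffPair x ∈ S :=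
    (mem_S _).2 ⟨exists_sdiffPair_ne_zero_iff.2 (mem_filter.1 hx).2,
      fun _ => disjoint_sdiff_sdiff⟩
  have fiber_eq (z) (hz : z ∈ S) :
      {x ∈ A | sdiffPair x = z} = univ.filter (sdiffPair · = z) := by
    refine (filter_filter _ _ _).trans (filter_congr fun x _ => and_iff_right_of_imp ?_)
    rintro rfl
    exact exists_sdiffPair_ne_zero_iff.1 ((mem_S _).1 hz).1
  let f (z : ReducedPair α k) : M := g z.sets.1 z.sets.2
  calc ∏ p ∈ A, g p.1.sets p.2.sets
      = ∏ x ∈ A, f (sdiffPair x) := prod_congr rfl fun x _ => hg _ _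
    _ = ∏ z ∈ S, ∏ x ∈ A with sdiffPair x = z, f z :=
      (prod_fiberwise_of_maps_to' maps_to f).symm
    _ = ∏ z ∈ S, f z ^ ∏ i, (Fintype.card α - 2 * z.1 i).choose (k i - z.1 i) := by
      refine prod_congr rfl fun z hz => ?_
      rw [prod_const, fiber_eq z hz, card_filter_sdiffPair_eq z ((mem_S z).1 hz).2]
    _ = _ := by
      rw [prod_sigma]
      simp_rw [prod_pow]
      rfl

end FamilyPairs

open FamilyPairs in
theorem stmt14_general (n l : ℕ) (k : Fin l → ℕ) :
    (∏ p ∈ Finset.univ.filter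
        (fun p : (∀ i, {s : Finset (Fin n) // s.card = k i}) ×
            (∀ i, {s : Finset (Fin n) // s.card = k i}) => p.1 ≠ p.2),
      ∑ i : Fin l,
        (((∑ j ∈ (p.1 i).1, X (i, j)) - ∑ j ∈ (p.2 i).1, X (i, j)) :
          MvPolynomial (Fin l × Fin n) ℂ)) =
    ∏ k' ∈ Finset.univ.filter
        (fun k' : ∀ i : Fin l, Fin (k i + 1) => ∃ i, (k' i : ℕ) ≠ 0),
      (∏ p ∈ Finset.univ.filter
          (fun p : (∀ i, {s : Finset (Fin n) // s.card = (k' i : ℕ)}) ×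
              (∀ i, {s : Finset (Fin n) // s.card = (k' i : ℕ)}) =>
            ∀ i, (p.1 i).1 ∩ (p.2 i).1 = ∅),
        ∑ i : Fin l,
          (((∑ j ∈ (p.1 i).1, X (i, j)) - ∑ j ∈ (p.2 i).1, X (i, j)) :
            MvPolynomial (Fin l × Fin n) ℂ)) ^
        (∏ i, Nat.choose (n - 2 * (k' i : ℕ)) (k i - (k' i : ℕ))) := by
  have h := prod_ne_eq_prod_disjoint_pow (k := k)
    (fun F G => ∑ i, ((∑ j ∈ F i, X (i, j)) - ∑ j ∈ G i, X (i, j) :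
      MvPolynomial (Fin l × Fin n) ℂ))
    fun F G => Finset.sum_congr rfl fun i _ => Finset.sum_sdiff_sub_sum_sdiff.symm
  rw [Fintype.card_fin] at h
  -- the statement decides `∃ i : Fin l, _` by `Nat.decidableExistsFin`, not the generic instance
  convert h

/-- in `ℂ[λ_{i,j} : 1 ≤ i ≤ l, 1 ≤ j ≤ n]`,
`∏_{F ≠ G} ∑_i (∑_{j ∈ F(i)} λ_{i,j} − ∑_{j ∈ G(i)} λ_{i,j})` (where `F, G` assign to
each `i` a `k_i`-element subset of `[n]`) equals
`∏_{k'} (∏_{(F,G)} ∑_i (∑_{j ∈ F(i)} λ_{i,j} − ∑_{j ∈ G(i)} λ_{i,j}))^{∏_i C(n−2k'_i, k_i−k'_i)}`,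
where `k' = (k'_1, …, k'_l)` ranges over tuples with `0 ≤ k'_i ≤ k_i`, not all zero, and
`F, G` assign to each `i` disjoint `k'_i`-element subsets of `[n]`. -/
theorem stmt14 (n l : ℕ) (hn : 1 ≤ n) (hl : 1 ≤ l) (k : Fin l → ℕ)
    (hk : ∀ i, 1 ≤ k i ∧ k i ≤ n) :
    (∏ p ∈ Finset.univ.filter
        (fun p : (∀ i, {s : Finset (Fin n) // s.card = k i}) ×
            (∀ i, {s : Finset (Fin n) // s.card = k i}) => p.1 ≠ p.2),
      ∑ i : Fin l,
        (((∑ j ∈ (p.1 i).1, X (i, j)) - ∑ j ∈ (p.2 i).1, X (i, j)) :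
          MvPolynomial (Fin l × Fin n) ℂ)) =
    ∏ k' ∈ Finset.univ.filter
        (fun k' : ∀ i : Fin l, Fin (k i + 1) => ∃ i, (k' i : ℕ) ≠ 0),
      (∏ p ∈ Finset.univ.filter
          (fun p : (∀ i, {s : Finset (Fin n) // s.card = (k' i : ℕ)}) ×
              (∀ i, {s : Finset (Fin n) // s.card = (k' i : ℕ)}) =>
            ∀ i, (p.1 i).1 ∩ (p.2 i).1 = ∅),
        ∑ i : Fin l,
          (((∑ j ∈ (p.1 i).1, X (i, j)) - ∑ j ∈ (p.2 i).1, X (i, j)) :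
            MvPolynomial (Fin l × Fin n) ℂ)) ^
        (∏ i, Nat.choose (n - 2 * (k' i : ℕ)) (k i - (k' i : ℕ))) :=
  stmt14_general n l k
end

section
/- Let a ≥ 1 and b ≥ 2a be integers, and define the sequence x_1,…,x_b of integers by x_k = (−2)^k for k ≠ 2a and x_{2a} = −(2^{2a} − 2). Then there is exactly one unordered pair {T_1, T_2} of disjoint nonempty subsets T_1, T_2 ⊆ {1,…,b} with Σ_{k∈T_1} x_k = Σ_{k∈T_2} x_k, and for this pair |T_1| = |T_2| = a. -/
/-!
Let `ε_k ∈ {-1, 0, 1}` be the signed indicator of a pair `(S₁, S₂)`. Since `x_k = (-2)^k` except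
that `x_{2a} = (-2)^{2a} - (2^{2a+1} - 2)`, equal sums say that the signed binary digits
`δ_k = ε_k (-1)^k` satisfy `∑ δ_k 2^k = ε_{2a} (2^{2a+1} - 2)`.

If `ε_{2a} = 0`, the top nonzero digit would outweigh all the others, so every digit vanishes and
the pair is empty. If `ε_{2a} = 1`, the other digits represent `2^{2a} - 2`; those above `2a`
contribute a multiple of `2^{2a+1}`, too large to be compensated by the digits below `2a`, so they
vanish, and then the digits `1, …, 2a - 1` must all be `1`. Hence `ε_k = (-1)^k` on `{1, …, 2a}`
and `0` elsewhere: `S₁` and `S₂` are the even and the odd numbers in `{1, …, 2a}`.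
-/

/-- The sequence `x_k = (−2)^k` for `k ≠ 2a`, and `x_{2a} = −(2^{2a} − 2)`. -/
def seqX (a : ℕ) : ℕ → ℤ := fun ke =>
  if ke = 2 * a then -(2 ^ (2 * a) - 2) else (-2) ^ ke

open Finset

section SignedIndicator

variable {α : Type*} [DecidableEq α]

def signedIndicator (S₁ S₂ : Finset α) (k : α) : ℤ :=
  (if k ∈ S₁ then 1 else 0) - (if k ∈ S₂ then 1 else 0)

variable {S₁ S₂ : Finset α}

lemma abs_signedIndicator_mul_neg_one_pow_le_one (k : α) (n : ℕ) :
    |signedIndicator S₁ S₂ k * (-1) ^ n| ≤ 1 := by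
  rw [abs_mul, abs_pow, abs_neg, abs_one, one_pow, mul_one]
  unfold signedIndicator
  split_ifs <;> simp

lemma signedIndicator_eq_one_iff (h : Disjoint S₁ S₂) {k : α} :
    signedIndicator S₁ S₂ k = 1 ↔ k ∈ S₁ := by
  have := fun hk : k ∈ S₁ => disjoint_left.mp h hk
  unfold signedIndicator
  split_ifs <;> simp_all

lemma signedIndicator_eq_neg_one_iff (h : Disjoint S₁ S₂) {k : α} :
    signedIndicator S₁ S₂ k = -1 ↔ k ∈ S₂ := by
  have := fun hk : k ∈ S₁ => disjoint_left.mp h hk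
  unfold signedIndicator
  split_ifs <;> simp_all

lemma signedIndicator_of_notMem {k : α} (h₁ : k ∉ S₁) (h₂ : k ∉ S₂) :
    signedIndicator S₁ S₂ k = 0 := by
  simp [signedIndicator, h₁, h₂]

lemma eq_of_signedIndicator_eq {T₁ T₂ : Finset α} (hS : Disjoint S₁ S₂) (hT : Disjoint T₁ T₂)
    (h : ∀ k, signedIndicator S₁ S₂ k = signedIndicator T₁ T₂ k) : S₁ = T₁ ∧ S₂ = T₂ := by
  constructor <;> ext k
  · rw [← signedIndicator_eq_one_iff hS, h, signedIndicator_eq_one_iff hT]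
  · rw [← signedIndicator_eq_neg_one_iff hS, h, signedIndicator_eq_neg_one_iff hT]

lemma sum_signedIndicator_mul {s : Finset α} (h₁ : S₁ ⊆ s) (h₂ : S₂ ⊆ s) (f : α → ℤ) :
    ∑ k ∈ s, signedIndicator S₁ S₂ k * f k = ∑ k ∈ S₁, f k - ∑ k ∈ S₂, f k := by
  simp only [signedIndicator, sub_mul, ite_mul, one_mul, zero_mul, sum_sub_distrib, sum_ite_mem,
    inter_eq_right.mpr h₁, inter_eq_right.mpr h₂]

end SignedIndicator

section SignedBinaryDigits

variable {s : Finset ℕ} {d : ℕ → ℤ}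

lemma sum_Ico_one_two_pow {n : ℕ} (hn : 1 ≤ n) : ∑ k ∈ Ico 1 n, (2 : ℤ) ^ k = 2 ^ n - 2 := by
  simpa using geom_sum_Ico_mul (2 : ℤ) hn

lemma sum_two_pow_lt {n : ℕ} (hs : ∀ k ∈ s, k < n) : ∑ k ∈ s, (2 : ℤ) ^ k < 2 ^ n := by
  exact_mod_cast Nat.geomSum_lt le_rfl hs

lemma abs_sum_mul_two_pow_le (hd : ∀ k ∈ s, |d k| ≤ 1) :
    |∑ k ∈ s, d k * 2 ^ k| ≤ ∑ k ∈ s, 2 ^ k :=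
  (abs_sum_le_sum_abs _ _).trans <| sum_le_sum fun k hk => by
    rw [abs_mul, abs_pow, abs_two]
    exact mul_le_of_le_one_left (by positivity) (hd k hk)

lemma eq_zero_of_sum_mul_two_pow_eq_zero (hd : ∀ k ∈ s, |d k| ≤ 1)
    (h : ∑ k ∈ s, d k * 2 ^ k = 0) : ∀ k ∈ s, d k = 0 := by
  induction s using Finset.induction_on_max with
  | empty => simp
  | insert t s hlt ih =>
    rw [sum_insert fun ht => (hlt t ht).false] at h
    have hrest := abs_sum_mul_two_pow_le fun k hk => hd k (mem_insert_of_mem hk)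
    -- the top digit outweighs all lower ones
    have hdt : d t = 0 := by
      have : |d t * 2 ^ t| < 1 * 2 ^ t := by
        rw [one_mul, eq_neg_of_add_eq_zero_left h, abs_neg]
        exact hrest.trans_lt (sum_two_pow_lt hlt)
      rw [abs_mul, abs_pow, abs_two] at this
      exact Int.abs_lt_one_iff.mp (lt_of_mul_lt_mul_right this (by positivity))
    rw [hdt, zero_mul, zero_add] at h
    simpa [hdt] using ih (fun k hk => hd k (mem_insert_of_mem hk)) h

lemma eq_one_and_eq_zero_of_sum_mul_two_pow_eq {l h : Finset ℕ} {m : ℕ}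
    (hl : ∀ k ∈ l, k < m) (hh : ∀ k ∈ h, m < k)
    (hdl : ∀ k ∈ l, |d k| ≤ 1) (hdh : ∀ k ∈ h, |d k| ≤ 1)
    (hsum : ∑ k ∈ l, d k * 2 ^ k + ∑ k ∈ h, d k * 2 ^ k = ∑ k ∈ l, 2 ^ k) :
    (∀ k ∈ l, d k = 1) ∧ ∀ k ∈ h, d k = 0 := by
  have hL := abs_le.mp (abs_sum_mul_two_pow_le hdl)
  have hlt := sum_two_pow_lt hl
  have hdvd : 2 ^ (m + 1) ∣ ∑ k ∈ h, d k * 2 ^ k :=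
    dvd_sum fun k hk => (pow_dvd_pow 2 (hh k hk)).mul_left _
  have hH : ∑ k ∈ h, d k * 2 ^ k = 0 :=
    Int.eq_zero_of_dvd_of_nonneg_of_lt (by linarith) (by rw [pow_succ]; linarith) hdvd
  refine ⟨fun k hk => ?_, eq_zero_of_sum_mul_two_pow_eq_zero hdh hH⟩
  have hzero : ∑ k ∈ l, (1 - d k) * 2 ^ k = 0 := by
    simp only [sub_mul, one_mul, sum_sub_distrib]
    linarith
  have hnonneg : ∀ k ∈ l, 0 ≤ (1 - d k) * 2 ^ k := fun k hk =>
    mul_nonneg (by linarith [(abs_le.mp (hdl k hk)).2]) (by positivity)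
  have := (sum_eq_zero_iff_of_nonneg hnonneg).mp hzero k hk
  linarith [(mul_eq_zero.mp this).resolve_right (by positivity)]

end SignedBinaryDigits

lemma disjoint_filter_even_filter_odd (s : Finset ℕ) : Disjoint (s.filter Even) (s.filter Odd) :=
  disjoint_filter_filter' _ _ fun _ he ho k hk => Nat.not_even_iff_odd.mpr (ho k hk) (he k hk)

lemma card_filter_even_Icc_one_two_mul (a : ℕ) : #((Icc 1 (2 * a)).filter Even) = a := by
  have : (Icc 1 (2 * a)).filter Even = (Icc 1 a).image (2 * ·) := by
    ext k
    simp only [mem_filter, mem_Icc, mem_image, Nat.even_iff]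
    constructor
    · rintro ⟨hk, hpar⟩
      exact ⟨k / 2, by omega, by omega⟩
    · rintro ⟨i, hi, rfl⟩
      omega
  rw [this, card_image_of_injective _ fun i j h => by simpa using h, Nat.card_Icc]
  omega

lemma card_filter_odd_Icc_one_two_mul (a : ℕ) : #((Icc 1 (2 * a)).filter Odd) = a := by
  have : (Icc 1 (2 * a)).filter Odd = (range a).image (2 * · + 1) := by
    ext k
    simp only [mem_filter, mem_Icc, mem_image, mem_range, Nat.odd_iff]
    constructor
    · rintro ⟨hk, hpar⟩
      exact ⟨k / 2, by omega, by omega⟩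
    · rintro ⟨i, hi, rfl⟩
      omega
  rw [this, card_image_of_injective _ fun i j h => by simpa using h, card_range]

lemma signedIndicator_evens_odds_mul_neg_one_pow (a k : ℕ) :
    signedIndicator ((Icc 1 (2 * a)).filter Even) ((Icc 1 (2 * a)).filter Odd) k * (-1) ^ k =
      if k ∈ Icc 1 (2 * a) then 1 else 0 := by
  rcases Nat.even_or_odd k with h | h
  · simp [signedIndicator, h, h.neg_one_pow, Nat.not_odd_iff_even.mpr h]
  · simp [signedIndicator, h, h.neg_one_pow, Nat.not_even_iff_odd.mpr h]

lemma seqX_eq (a k : ℕ) :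
    seqX a k = (-2) ^ k - if k = 2 * a then 2 ^ (2 * a + 1) - 2 else 0 := by
  unfold seqX
  split_ifs with h
  · rw [h, (even_two_mul a).neg_pow, pow_succ]; ring
  · rw [sub_zero]

variable {a b : ℕ} {S₁ S₂ : Finset ℕ}

def IsEqualSumPair (a b : ℕ) (S₁ S₂ : Finset ℕ) : Prop :=
  S₁ ⊆ Icc 1 b ∧ S₂ ⊆ Icc 1 b ∧ S₁.Nonempty ∧ S₂.Nonempty ∧ Disjoint S₁ S₂ ∧
    ∑ k ∈ S₁, seqX a k = ∑ k ∈ S₂, seqX a k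

lemma IsEqualSumPair.symm (h : IsEqualSumPair a b S₁ S₂) :
    IsEqualSumPair a b S₂ S₁ :=
  let ⟨h₁, h₂, hn₁, hn₂, hd, hs⟩ := h
  ⟨h₂, h₁, hn₂, hn₁, hd.symm, hs.symm⟩

lemma sum_seqX_eq_sum_seqX_iff (ha : 1 ≤ a) (hb : 2 * a ≤ b)
    (h₁ : S₁ ⊆ Icc 1 b) (h₂ : S₂ ⊆ Icc 1 b) :
    ∑ k ∈ S₁, seqX a k = ∑ k ∈ S₂, seqX a k ↔
      ∑ k ∈ Icc 1 b, signedIndicator S₁ S₂ k * (-1) ^ k * 2 ^ k =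
        signedIndicator S₁ S₂ (2 * a) * (2 ^ (2 * a + 1) - 2) := by
  have hmem : 2 * a ∈ Icc 1 b := mem_Icc.mpr ⟨by omega, hb⟩
  have key : ∑ k ∈ S₁, seqX a k - ∑ k ∈ S₂, seqX a k =
      ∑ k ∈ Icc 1 b, signedIndicator S₁ S₂ k * (-1) ^ k * 2 ^ k -
        signedIndicator S₁ S₂ (2 * a) * (2 ^ (2 * a + 1) - 2) := by
    rw [← sum_signedIndicator_mul h₁ h₂]
    simp only [seqX_eq, mul_sub, sum_sub_distrib, mul_ite,
      mul_zero, sum_ite_eq', if_pos hmem, neg_pow (2 : ℤ), mul_assoc]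
  rw [← sub_eq_zero, key, sub_eq_zero]

lemma two_mul_mem_or_mem (ha : 1 ≤ a) (hb : 2 * a ≤ b) (hS : IsEqualSumPair a b S₁ S₂) :
    2 * a ∈ S₁ ∨ 2 * a ∈ S₂ := by
  obtain ⟨h₁, h₂, ⟨k, hk⟩, -, hd, hs⟩ := hS
  by_contra! hm
  rw [sum_seqX_eq_sum_seqX_iff ha hb h₁ h₂, signedIndicator_of_notMem hm.1 hm.2, zero_mul] at hs
  have hzero := eq_zero_of_sum_mul_two_pow_eq_zero
    (fun j _ => abs_signedIndicator_mul_neg_one_pow_le_one j j) hs k (h₁ hk)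
  rw [(signedIndicator_eq_one_iff hd).mpr hk, one_mul] at hzero
  exact absurd hzero (pow_ne_zero k (by norm_num))

lemma signedIndicator_mul_neg_one_pow_eq (ha : 1 ≤ a) (hb : 2 * a ≤ b)
    (hS : IsEqualSumPair a b S₁ S₂) (hm : 2 * a ∈ S₁) (k : ℕ) :
    signedIndicator S₁ S₂ k * (-1) ^ k = if k ∈ Icc 1 (2 * a) then 1 else 0 := by
  obtain ⟨h₁, h₂, -, -, hd, hs⟩ := hS
  have hε : signedIndicator S₁ S₂ (2 * a) = 1 := (signedIndicator_eq_one_iff hd).mpr hm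
  set δ : ℕ → ℤ := fun k => signedIndicator S₁ S₂ k * (-1) ^ k with hδ
  have hsum : ∑ k ∈ Ico 1 (2 * a), δ k * 2 ^ k + ∑ k ∈ Ico (2 * a + 1) (b + 1), δ k * 2 ^ k =
      ∑ k ∈ Ico 1 (2 * a), 2 ^ k := by
    rw [sum_seqX_eq_sum_seqX_iff ha hb h₁ h₂, hε, one_mul, ← Ico_add_one_right_eq_Icc,
      ← sum_Ico_consecutive _ (by omega : 1 ≤ 2 * a) (by omega),
      sum_eq_sum_Ico_succ_bot (a := 2 * a) (by omega)] at hs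
    rw [sum_Ico_one_two_pow (by omega)]
    simp only [hδ, hε, (even_two_mul a).neg_one_pow] at hs ⊢
    rw [pow_succ] at hs
    linarith
  obtain ⟨hlow, hhigh⟩ := eq_one_and_eq_zero_of_sum_mul_two_pow_eq (m := 2 * a)
    (fun j hj => (mem_Ico.mp hj).2) (fun j hj => (mem_Ico.mp hj).1)
    (fun j _ => abs_signedIndicator_mul_neg_one_pow_le_one j j)
    (fun j _ => abs_signedIndicator_mul_neg_one_pow_le_one j j) hsum
  change δ k = _
  split_ifs with hk
  · obtain hk' | rfl := (mem_Icc.mp hk).2.lt_or_eq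
    · exact hlow k (mem_Ico.mpr ⟨(mem_Icc.mp hk).1, hk'⟩)
    · simp [hδ, hε, (even_two_mul a).neg_one_pow]
  · by_cases hkb : k ∈ Icc 1 b
    · exact hhigh k (by simp only [mem_Icc, mem_Ico] at hk hkb ⊢; omega)
    · simp [hδ, signedIndicator_of_notMem (fun h => hkb (h₁ h)) (fun h => hkb (h₂ h))]

lemma isEqualSumPair_evens_odds (ha : 1 ≤ a) (hb : 2 * a ≤ b) :
    IsEqualSumPair a b ((Icc 1 (2 * a)).filter Even) ((Icc 1 (2 * a)).filter Odd) := by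
  have hsub := Icc_subset_Icc (le_refl 1) hb
  refine ⟨(filter_subset _ _).trans hsub, (filter_subset _ _).trans hsub,
    ⟨2, by simp; omega⟩, ⟨1, by simp; omega⟩, disjoint_filter_even_filter_odd _, ?_⟩
  rw [sum_seqX_eq_sum_seqX_iff ha hb ((filter_subset _ _).trans hsub)
    ((filter_subset _ _).trans hsub)]
  have hm := signedIndicator_evens_odds_mul_neg_one_pow a (2 * a)
  rw [if_pos (mem_Icc.mpr ⟨by omega, le_rfl⟩), (even_two_mul a).neg_one_pow, mul_one] at hm
  simp only [signedIndicator_evens_odds_mul_neg_one_pow, ite_mul, one_mul, zero_mul, sum_ite_mem,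
    inter_eq_right.mpr hsub, hm]
  rw [← Ico_add_one_right_eq_Icc, sum_Ico_one_two_pow (by omega)]

lemma eq_evens_odds_of_two_mul_mem (ha : 1 ≤ a) (hb : 2 * a ≤ b)
    (hS : IsEqualSumPair a b S₁ S₂) (hm : 2 * a ∈ S₁) :
    S₁ = (Icc 1 (2 * a)).filter Even ∧ S₂ = (Icc 1 (2 * a)).filter Odd :=
  eq_of_signedIndicator_eq hS.2.2.2.2.1 (disjoint_filter_even_filter_odd _) fun k =>
    mul_right_cancel₀ (pow_ne_zero k (by norm_num : (-1 : ℤ) ≠ 0)) <| by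
      rw [signedIndicator_mul_neg_one_pow_eq ha hb hS hm, signedIndicator_evens_odds_mul_neg_one_pow]

/-- for `1 ≤ a` and `2a ≤ b`, there is exactly one unordered pair
`{T₁, T₂}` of disjoint nonempty subsets of `{1, …, b}` with
`∑_{k ∈ T₁} x_k = ∑_{k ∈ T₂} x_k`, and for this pair `|T₁| = |T₂| = a`. -/
theorem stmt15 (a b : ℕ) (ha : 1 ≤ a) (hb : 2 * a ≤ b) :
    ∃ T₁ T₂ : Finset ℕ,
      (T₁ ⊆ Finset.Icc 1 b ∧ T₂ ⊆ Finset.Icc 1 b ∧ T₁.Nonempty ∧ T₂.Nonempty ∧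
        Disjoint T₁ T₂ ∧ ∑ ke ∈ T₁, seqX a ke = ∑ ke ∈ T₂, seqX a ke) ∧
      T₁.card = a ∧ T₂.card = a ∧
      ∀ S₁ S₂ : Finset ℕ,
        (S₁ ⊆ Finset.Icc 1 b ∧ S₂ ⊆ Finset.Icc 1 b ∧ S₁.Nonempty ∧ S₂.Nonempty ∧
          Disjoint S₁ S₂ ∧ ∑ ke ∈ S₁, seqX a ke = ∑ ke ∈ S₂, seqX a ke) →
        ((S₁ = T₁ ∧ S₂ = T₂) ∨ (S₁ = T₂ ∧ S₂ = T₁)) := by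
  refine ⟨_, _, isEqualSumPair_evens_odds ha hb, card_filter_even_Icc_one_two_mul a,
    card_filter_odd_Icc_one_two_mul a, fun S₁ S₂ hS => ?_⟩
  rcases two_mul_mem_or_mem ha hb hS with hm | hm
  · exact Or.inl (eq_evens_odds_of_two_mul_mem ha hb hS hm)
  · exact Or.inr (eq_evens_odds_of_two_mul_mem ha hb (IsEqualSumPair.symm hS) hm).symm
end

section
/- Let n, l ≥ 2 and let k_1,…,k_l be positive integers with k_1 + … + k_l = n. Let (V_1,…,V_l) and (V'_1,…,V'_l) be l-tuples of linear subspaces of ℂⁿ such that for every i, dim V_i = dim V'_i = k_i; the span of V_1,…,V_l and the span of V'_1,…,V'_l both have dimension n − 1; and for every j, the family (V_i)_{i≠j} is independent (their sum is a direct sum), and likewise the family (V'_i)_{i≠j} is independent. Then there exists an invertible n×n complex matrix g with g(V_i) = V'_i for every i. -/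
/-!
The addition map `σ : ∏ᵢ Vᵢ → E` has image `⨆ᵢ Vᵢ`, whose dimension is one less than that of the
source, so its kernel is a line `K ∙ x`. Independence of each family `(Vᵢ)_{i ≠ j}` forces every
component `xⱼ` to be nonzero. Choosing isomorphisms `φᵢ : Vᵢ ≃ V'ᵢ` with `φᵢ xᵢ = x'ᵢ`, the product
`∏ᵢ φᵢ` carries `ker σ` onto `ker σ'`, hence descends to an isomorphism `⨆ᵢ Vᵢ ≃ ⨆ᵢ V'ᵢ`, which
extends to an automorphism of `E`.
-/

open Module Submodule

variable {K E : Type*} [Field K] [AddCommGroup E] [Module K E]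

theorem exists_linearEquiv_apply_eq_of_finrank_eq {V W : Type*} [AddCommGroup V] [Module K V]
    [AddCommGroup W] [Module K W] [FiniteDimensional K V] (h : finrank K V = finrank K W)
    {v : V} {w : W} (hv : v ≠ 0) (hw : w ≠ 0) : ∃ e : V ≃ₗ[K] W, e v = w := by
  have : FiniteDimensional K W := .of_finrank_pos (h ▸ finrank_pos_iff_exists_ne_zero.2 ⟨v, hv⟩)
  let e₀ := LinearEquiv.ofFinrankEq V W h
  have hv₀ : e₀ v ≠ 0 := by simpa using hv
  obtain ⟨g, hg⟩ := exists_linearEquiv_restrict_eq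
    ((LinearEquiv.coord K W _ hv₀).trans (LinearEquiv.toSpanNonzeroSingleton K W w hw))
  refine ⟨e₀.trans g, ?_⟩
  simpa [LinearEquiv.coord_self] using (hg ⟨e₀ v, mem_span_singleton_self _⟩).symm

theorem exists_linearEquiv_apply_eq_of_map_ker_eq [FiniteDimensional K E] {M M' : Type*}
    [AddCommGroup M] [Module K M] [AddCommGroup M'] [Module K M']
    (f : M →ₗ[K] E) (f' : M' →ₗ[K] E) (Φ : M ≃ₗ[K] M')
    (hΦ : (LinearMap.ker f).map (Φ : M →ₗ[K] M') = LinearMap.ker f') :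
    ∃ g : E ≃ₗ[K] E, ∀ m, g (f m) = f' (Φ m) := by
  obtain ⟨g, hg⟩ := exists_linearEquiv_restrict_eq
    (f.quotKerEquivRange.symm ≪≫ₗ Quotient.equiv _ _ Φ hΦ ≪≫ₗ f'.quotKerEquivRange)
  refine ⟨g, fun m => ?_⟩
  rw [← hg ⟨f m, LinearMap.mem_range_self f m⟩]
  simp [Quotient.equiv_apply]

namespace Submodule

variable {ι : Type*} [Fintype ι]

def sumMap (V : ι → Submodule K E) : (Π i, V i) →ₗ[K] E :=
  ∑ i, (V i).subtype ∘ₗ LinearMap.proj i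

variable (V : ι → Submodule K E)

theorem sumMap_apply (x : Π i, V i) : sumMap V x = ∑ i, (x i : E) := by
  simp [sumMap]

theorem sumMap_single [DecidableEq ι] (i : ι) (v : V i) : sumMap V (Pi.single i v) = v := by
  rw [sumMap_apply, Finset.sum_eq_single i (fun j _ hj => by simp [hj]) (by simp)]
  simp

theorem range_sumMap : LinearMap.range (sumMap V) = ⨆ i, V i := by
  classical
  refine le_antisymm ?_ (iSup_le fun i v hv => ⟨Pi.single i ⟨v, hv⟩, sumMap_single V i _⟩)
  rintro _ ⟨x, rfl⟩
  rw [sumMap_apply]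
  exact sum_mem fun i _ => mem_iSup_of_mem i (x i).2

variable {V}

theorem eq_zero_of_sumMap_eq_zero {j : ι}
    (hind : ∀ i, i ≠ j → V i ⊓ (⨆ i', ⨆ (_ : i' ≠ i ∧ i' ≠ j), V i') = ⊥)
    {x : Π i, V i} (hx : sumMap V x = 0) (hj : x j = 0) : x = 0 := by
  classical
  funext i
  obtain rfl | hij := eq_or_ne i j
  · exact hj
  have hxi : (x i : E) = -∑ i' ∈ Finset.univ.erase i, (x i' : E) := by
    rw [eq_neg_iff_add_eq_zero, Finset.add_sum_erase _ (fun i' => (x i' : E)) (Finset.mem_univ i),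
      ← sumMap_apply, hx]
  have hmem : (x i : E) ∈ ⨆ i', ⨆ (_ : i' ≠ i ∧ i' ≠ j), V i' := by
    rw [hxi]
    refine neg_mem (sum_mem fun i' hi' => ?_)
    obtain rfl | hi'j := eq_or_ne i' j
    · simp [hj]
    · exact mem_iSup_of_mem i' (mem_iSup_of_mem ⟨Finset.ne_of_mem_erase hi', hi'j⟩ (x i').2)
  exact Subtype.ext <| (mem_bot K).1 <| (hind i hij).le ⟨(x i).2, hmem⟩

theorem exists_ker_sumMap_eq_span_singleton [FiniteDimensional K E]
    (hrank : ∑ i, finrank K (V i) = finrank K ↥(⨆ i, V i) + 1)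
    (hind : ∀ j i, i ≠ j → V i ⊓ (⨆ i', ⨆ (_ : i' ≠ i ∧ i' ≠ j), V i') = ⊥) :
    ∃ x, LinearMap.ker (sumMap V) = K ∙ x ∧ ∀ i, x i ≠ 0 := by
  have hker : finrank K (LinearMap.ker (sumMap V)) = 1 := by
    have := (sumMap V).finrank_range_add_finrank_ker
    rw [range_sumMap, finrank_pi_fintype, hrank] at this
    omega
  obtain ⟨x, hx, hx0⟩ := exists_mem_ne_zero_of_ne_bot (p := LinearMap.ker (sumMap V)) fun h => by
    rw [h, finrank_bot] at hker
    omega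
  exact ⟨x, eq_span_singleton_of_mem_of_finrank_eq_one hker hx hx0,
    fun j hj => hx0 (eq_zero_of_sumMap_eq_zero (hind j) hx hj)⟩

theorem exists_linearEquiv_map_eq [FiniteDimensional K E] (V V' : ι → Submodule K E)
    (hdim : ∀ i, finrank K (V i) = finrank K (V' i))
    (hrank : ∑ i, finrank K (V i) = finrank K ↥(⨆ i, V i) + 1)
    (hrank' : ∑ i, finrank K (V' i) = finrank K ↥(⨆ i, V' i) + 1)
    (hind : ∀ j i, i ≠ j → V i ⊓ (⨆ i', ⨆ (_ : i' ≠ i ∧ i' ≠ j), V i') = ⊥)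
    (hind' : ∀ j i, i ≠ j → V' i ⊓ (⨆ i', ⨆ (_ : i' ≠ i ∧ i' ≠ j), V' i') = ⊥) :
    ∃ g : E ≃ₗ[K] E, ∀ i, (V i).map (g : E →ₗ[K] E) = V' i := by
  classical
  obtain ⟨x, hker, hx⟩ := exists_ker_sumMap_eq_span_singleton hrank hind
  obtain ⟨x', hker', hx'⟩ := exists_ker_sumMap_eq_span_singleton hrank' hind'
  choose φ hφ using fun i => exists_linearEquiv_apply_eq_of_finrank_eq (hdim i) (hx i) (hx' i)
  let Φ := LinearEquiv.piCongrRight φ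
  have hΦ : (LinearMap.ker (sumMap V)).map (Φ : _ →ₗ[K] _) = LinearMap.ker (sumMap V') := by
    rw [hker, hker', map_span, Set.image_singleton]
    congr 2
    exact funext hφ
  obtain ⟨g, hg⟩ := exists_linearEquiv_apply_eq_of_map_ker_eq _ _ Φ hΦ
  have hgφ (i : ι) :
      (g : E →ₗ[K] E) ∘ₗ (V i).subtype = (V' i).subtype ∘ₗ (φ i : V i →ₗ[K] V' i) := by
    ext v
    have hΦv : Φ (Pi.single i v) = Pi.single i (φ i v) :=
      funext fun j => Pi.apply_single (fun j => φ j) (fun j => map_zero _) i v j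
    simpa only [hΦv, sumMap_single, LinearMap.comp_apply, subtype_apply, LinearEquiv.coe_coe]
      using hg (Pi.single i v)
  refine ⟨g, fun i => ?_⟩
  rw [← range_subtype (V i), ← LinearMap.range_comp, hgφ,
    LinearMap.range_comp_of_range_eq_top _ (LinearEquiv.range _), range_subtype]

end Submodule

theorem stmt16_general (n l : ℕ) (hn : 2 ≤ n) (k : Fin l → ℕ)
    (hsum : ∑ i, k i = n)
    (V V' : Fin l → Submodule ℂ (Fin n → ℂ))
    (hdim : ∀ i, Module.finrank ℂ ↥(V i) = k i)
    (hdim' : ∀ i, Module.finrank ℂ ↥(V' i) = k i)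
    (hspan : Module.finrank ℂ ↥(⨆ i, V i) = n - 1)
    (hspan' : Module.finrank ℂ ↥(⨆ i, V' i) = n - 1)
    (hind : ∀ j i, i ≠ j →
      V i ⊓ (⨆ i' : Fin l, ⨆ (_ : i' ≠ i ∧ i' ≠ j), V i') = ⊥)
    (hind' : ∀ j i, i ≠ j →
      V' i ⊓ (⨆ i' : Fin l, ⨆ (_ : i' ≠ i ∧ i' ≠ j), V' i') = ⊥) :
    ∃ g : Matrix (Fin n) (Fin n) ℂ, IsUnit g ∧
      ∀ i, Submodule.map g.mulVecLin (V i) = V' i := by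
  have hrank {W : Fin l → Submodule ℂ (Fin n → ℂ)} (hW : ∀ i, finrank ℂ (W i) = k i)
      (hspan : finrank ℂ ↥(⨆ i, W i) = n - 1) :
      ∑ i, finrank ℂ (W i) = finrank ℂ ↥(⨆ i, W i) + 1 := by
    simp only [hW, hsum, hspan]
    omega
  obtain ⟨g, hg⟩ := exists_linearEquiv_map_eq V V' (fun i => (hdim i).trans (hdim' i).symm)
    (hrank hdim hspan) (hrank hdim' hspan') hind hind'
  refine ⟨LinearMap.toMatrix' g,
    LinearMap.isUnit_toMatrix'_iff.2 ((Module.End.isUnit_iff _).2 g.bijective), ?_⟩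
  rw [← Matrix.toLin'_apply', Matrix.toLin'_toMatrix']
  exact hg

/-- let `k_1 + … + k_l = n` and let `(V_1, …, V_l)` and `(V'_1, …, V'_l)`
be tuples of subspaces of `ℂⁿ` with `dim V_i = dim V'_i = k_i`, whose spans both have
dimension `n − 1`, and such that for every `j`, the family `(V_i)_{i ≠ j}` is independent
(each member meets the sum of the others in `0`), and likewise for `(V'_i)_{i ≠ j}`.
Then some invertible matrix `g` carries each `V_i` onto `V'_i`. -/
theorem stmt16 (n l : ℕ) (hn : 2 ≤ n) (hl : 2 ≤ l) (k : Fin l → ℕ)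
    (hk : ∀ i, 1 ≤ k i) (hsum : ∑ i, k i = n)
    (V V' : Fin l → Submodule ℂ (Fin n → ℂ))
    (hdim : ∀ i, Module.finrank ℂ ↥(V i) = k i)
    (hdim' : ∀ i, Module.finrank ℂ ↥(V' i) = k i)
    (hspan : Module.finrank ℂ ↥(⨆ i, V i) = n - 1)
    (hspan' : Module.finrank ℂ ↥(⨆ i, V' i) = n - 1)
    (hind : ∀ j i, i ≠ j →
      V i ⊓ (⨆ i' : Fin l, ⨆ (_ : i' ≠ i ∧ i' ≠ j), V i') = ⊥)
    (hind' : ∀ j i, i ≠ j →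
      V' i ⊓ (⨆ i' : Fin l, ⨆ (_ : i' ≠ i ∧ i' ≠ j), V' i') = ⊥) :
    ∃ g : Matrix (Fin n) (Fin n) ℂ, IsUnit g ∧
      ∀ i, Submodule.map g.mulVecLin (V i) = V' i :=
  stmt16_general n l hn k hsum V V' hdim hdim' hspan hspan' hind hind'
end

section
/- For every n ≥ 1, the group GL_n(ℂ) has no nontrivial finite quotient: for every finite group G, every group homomorphism φ : GL_n(ℂ) → G is trivial (φ(g) = 1 for all g). -/
open Polynomial in
/-- Every unit of a finite-dimensional commutative `ℂ`-algebra has `k`-th roots. -/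
lemma aux_root_stmt17 {A : Type} [CommRing A] [Algebra ℂ A] [FiniteDimensional ℂ A]
    {k : ℕ} (hk : 0 < k) (u : Aˣ) : ∃ v : Aˣ, (v : A) ^ k = (u : A) := by
  haveI : IsArtinianRing A := IsArtinianRing.of_finite ℂ A
  haveI : Finite {I : Ideal A | I.IsMaximal} := (IsArtinianRing.setOfPred_isMaximal_finite A).to_subtype
  have hroot : ∀ I : {I : Ideal A | I.IsMaximal}, ∃ y : A ⧸ I.1,
      y ^ k = Ideal.Quotient.mk I.1 (u : A) := by
    intro I
    haveI : I.1.IsMaximal := I.2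
    haveI : Algebra.IsIntegral ℂ (A ⧸ I.1) := Algebra.IsIntegral.of_finite ℂ _
    obtain ⟨c, hc⟩ := (IsAlgClosed.algebraMap_bijective_of_isIntegral (k := ℂ) (K := A ⧸ I.1)).2
        (Ideal.Quotient.mk I.1 (u : A))
    obtain ⟨d, hd⟩ := IsAlgClosed.exists_pow_nat_eq c hk
    exact ⟨algebraMap ℂ _ d, by rw [← map_pow, hd, hc]⟩
  choose y hy using hroot
  obtain ⟨x, hx⟩ := Ideal.pi_quotient_surjective
      (I := fun I : {I : Ideal A | I.IsMaximal} => I.1)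
      (fun I J hIJ => Ideal.isCoprime_iff_sup_eq.mpr
        (I.2.coprime_of_ne J.2 (by simpa using Subtype.coe_ne_coe.mpr hIJ))) y
  have hnil : IsNilpotent (x ^ k - (u : A)) := by
    rw [nilpotent_iff_mem_prime]
    intro J hJ
    haveI : J.IsMaximal := IsArtinianRing.isMaximal_of_isPrime J
    rw [← Ideal.Quotient.eq_zero_iff_mem, map_sub, map_pow, hx ⟨J, this⟩, hy ⟨J, this⟩,
      sub_self]
  have hxk : IsUnit (x ^ k) := by
    have h := IsNilpotent.isUnit_add_left_of_commute hnil u.isUnit (Commute.all _ _)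
    simpa using h
  have hxu : IsUnit x := (isUnit_pow_iff hk.ne').mp hxk
  -- Newton's method
  have hP : IsNilpotent (aeval x ((X : A[X]) ^ k - C (u : A))) := by simpa using hnil
  have hP' : IsUnit (aeval x (derivative ((X : A[X]) ^ k - C (u : A)))) := by
    have hder : derivative ((X : A[X]) ^ k - C (u : A)) = C (k : A) * X ^ (k - 1) := by
      simp [derivative_X_pow]
    rw [hder]
    have h1 : IsUnit ((k : A)) := by
      have hkC : IsUnit ((k : ℂ)) := isUnit_iff_ne_zero.mpr (Nat.cast_ne_zero.mpr hk.ne')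
      simpa using hkC.map (algebraMap ℂ A)
    simpa using h1.mul (hxu.pow (k - 1))
  obtain ⟨r, ⟨-, hr⟩, -⟩ := Polynomial.existsUnique_nilpotent_sub_and_aeval_eq_zero hP hP'
  have hrk : r ^ k = (u : A) := by
    have := hr
    simp only [map_sub, map_pow, aeval_X, aeval_C, sub_eq_zero] at this
    exact this
  have hru : IsUnit r := (isUnit_pow_iff hk.ne').mp (hrk ▸ u.isUnit)
  obtain ⟨v, rfl⟩ := hru
  exact ⟨v, hrk⟩

set_option synthInstance.maxHeartbeats 1000000 in
set_option maxHeartbeats 1000000 in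
/-- for `n ≥ 1`, the group `GLₙ(ℂ)` has no nontrivial finite quotient:
every homomorphism to a finite group is trivial. -/
theorem stmt17 (n : ℕ) (hn : 1 ≤ n) (G : Type) [Group G] [Finite G]
    (φ : Matrix.GeneralLinearGroup (Fin n) ℂ →* G)
    (g : Matrix.GeneralLinearGroup (Fin n) ℂ) : φ g = 1 := by
  set M : Matrix (Fin n) (Fin n) ℂ := (g : Matrix (Fin n) (Fin n) ℂ) with hM
  set S := Algebra.adjoin ℂ ({M} : Set (Matrix (Fin n) (Fin n) ℂ)) with hS
  let a : S := ⟨M, Algebra.self_mem_adjoin_singleton ℂ M⟩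
  -- `a` is invertible in `S`
  have hinj : Function.Injective (LinearMap.mulLeft ℂ a) := by
    intro p q hpq
    have h1 : M * (p : Matrix (Fin n) (Fin n) ℂ) = M * (q : Matrix (Fin n) (Fin n) ℂ) :=
      congrArg Subtype.val hpq
    have h2 := congrArg (fun z => ((g⁻¹ : Matrix.GeneralLinearGroup (Fin n) ℂ)
        : Matrix (Fin n) (Fin n) ℂ) * z) h1
    simp only [← mul_assoc, hM, Units.inv_mul, one_mul] at h2
    exact Subtype.ext h2
  obtain ⟨b, hb⟩ := (LinearMap.injective_iff_surjective.mp hinj) 1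
  have hab : a * b = 1 := hb
  letI : CommRing S := Algebra.adjoinCommRingOfComm ℂ (by rintro x rfl y rfl; rfl)
  let u : Sˣ := ⟨a, b, hab, by rw [mul_comm]; exact hab⟩
  have hk : 0 < Nat.card G := Nat.card_pos
  obtain ⟨v, hv⟩ := aux_root_stmt17 hk u
  have hvu : v ^ (Nat.card G) = u := by
    ext
    rw [Units.val_pow_eq_pow_val, hv]
  let f : S →* Matrix (Fin n) (Fin n) ℂ := (Subalgebra.val S).toRingHom.toMonoidHom
  have hgu : Units.map f u = g := by
    ext
    rfl
  have hpow : (Units.map f v) ^ (Nat.card G) = g := by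
    rw [← map_pow, hvu, hgu]
  rw [← hpow, map_pow]
  exact pow_card_eq_one'
end
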